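/- Dynamic programming principle for the lower value function: for every x ∈ ℝⁿ and every t ≥ 0, V^−(x) = inf_{α ∈ Γ} sup_{d ∈ 𝒟} max{ e^{−γt} V^−(φ_x^{α(d),d}(t)), sup_{τ ∈ [0,t]} e^{−γτ} h(φ_x^{α(d),d}(τ)) }. -/

import Mathlib

open MeasureTheory Set Filter Topology

noncomputable section

/-- Euclidean state/control space. -/
abbrev Euc (k : ℕ) := EuclideanSpace ℝ (Fin k)

/-- The set of admissible (measurable) control signals valued in `A`. -/
def Controls {k : ℕ} (A : Set (Euc k)) : Set (ℝ → Euc k) :=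
  {c | Measurable c ∧ ∀ t : ℝ, c t ∈ A}

/-- Two signals agree almost everywhere on the interval `[0, s]`. -/
def AgreeAE {k : ℕ} (c₁ c₂ : ℝ → Euc k) (s : ℝ) : Prop :=
  ∀ᵐ t ∂(volume.restrict (Icc (0 : ℝ) s)), c₁ t = c₂ t

/-- Nonanticipative strategies, mapping controls valued in `A` to controls valued in `B`:
whenever two input signals agree a.e. on `[0, s]`, the outputs agree a.e. on `[0, s]`. -/
def NAStrategies {k j : ℕ} (A : Set (Euc k)) (B : Set (Euc j)) :
    Set ((ℝ → Euc k) → (ℝ → Euc j)) :=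
  {α | (∀ c ∈ Controls A, α c ∈ Controls B) ∧
    ∀ c₁ ∈ Controls A, ∀ c₂ ∈ Controls A, ∀ s : ℝ, 0 ≤ s →
      AgreeAE c₁ c₂ s → AgreeAE (α c₁) (α c₂) s}

variable {n m l : ℕ}

/-- `φ` assigns to each initial state and each pair of control signals the (unique, globally
defined) trajectory of `ẋ(s) = f(x(s), u(s), d(s))`, in integral form. -/
def IsTrajectory (f : Euc n → Euc m → Euc l → Euc n)
    (Uset : Set (Euc m)) (Dset : Set (Euc l))
    (φ : Euc n → (ℝ → Euc m) → (ℝ → Euc l) → ℝ → Euc n) : Prop :=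
  ∀ x : Euc n, ∀ u ∈ Controls Uset, ∀ d ∈ Controls Dset, ∀ t : ℝ, 0 ≤ t →
    φ x u d t = x + ∫ s in (0 : ℝ)..t, f (φ x u d s) (u s) (d s)

/-- `f` is locally Lipschitz in `x`, uniformly over `u ∈ U` and `d ∈ D`. -/
def LocLipschitzUniformly (f : Euc n → Euc m → Euc l → Euc n)
    (Uset : Set (Euc m)) (Dset : Set (Euc l)) : Prop :=
  ∀ x₀ : Euc n, ∃ K : NNReal, ∃ r : ℝ, 0 < r ∧
    ∀ u ∈ Uset, ∀ d ∈ Dset, LipschitzOnWith K (fun y => f y u d) (Metric.ball x₀ r)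

/-- Joint continuity of `f` on `ℝⁿ × U × D`. -/
def ContinuousOnUD (f : Euc n → Euc m → Euc l → Euc n)
    (Uset : Set (Euc m)) (Dset : Set (Euc l)) : Prop :=
  ContinuousOn (fun q : Euc n × Euc m × Euc l => f q.1 q.2.1 q.2.2)
    (univ ×ˢ Uset ×ˢ Dset)

/-- The payoff `J(x, u, d) = sup_{t ∈ [0,∞)} e^{-γ t} h(φ_x^{u,d}(t))`. -/
def payoff (h : Euc n → ℝ) (γ : ℝ)
    (φ : Euc n → (ℝ → Euc m) → (ℝ → Euc l) → ℝ → Euc n)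
    (x : Euc n) (u : ℝ → Euc m) (d : ℝ → Euc l) : ℝ :=
  ⨆ t : Ici (0 : ℝ), Real.exp (-γ * t.1) * h (φ x u d t.1)

/-- The lower value function `V⁻(x) = inf_{α ∈ Γ} sup_{d ∈ 𝒟} J(x, α(d), d)`. -/
def lowerValue (h : Euc n → ℝ) (γ : ℝ)
    (Uset : Set (Euc m)) (Dset : Set (Euc l))
    (φ : Euc n → (ℝ → Euc m) → (ℝ → Euc l) → ℝ → Euc n) (x : Euc n) : ℝ :=
  ⨅ α : ↥(NAStrategies Dset Uset), ⨆ d : ↥(Controls Dset),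
    payoff h γ φ x (α.1 d.1) d.1

/-- The upper value function `V⁺(x) = sup_{β ∈ Δ} inf_{u ∈ 𝒰} J(x, u, β(u))`. -/
def upperValue (h : Euc n → ℝ) (γ : ℝ)
    (Uset : Set (Euc m)) (Dset : Set (Euc l))
    (φ : Euc n → (ℝ → Euc m) → (ℝ → Euc l) → ℝ → Euc n) (x : Euc n) : ℝ :=
  ⨆ β : ↥(NAStrategies Uset Dset), ⨅ u : ↥(Controls Uset),
    payoff h γ φ x u.1 (β.1 u.1)

/-- The lower robust controlled invariant set `R⁻`. -/
def lowerRCIS (h : Euc n → ℝ)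
    (Uset : Set (Euc m)) (Dset : Set (Euc l))
    (φ : Euc n → (ℝ → Euc m) → (ℝ → Euc l) → ℝ → Euc n) : Set (Euc n) :=
  {x | ∀ ε > (0 : ℝ), ∀ T ≥ (0 : ℝ), ∃ α ∈ NAStrategies Dset Uset,
    ∀ d ∈ Controls Dset, ∀ t ∈ Icc (0 : ℝ) T, h (φ x (α d) d t) ≤ ε}

/-- The upper robust controlled invariant set `R⁺`. -/
def upperRCIS (h : Euc n → ℝ)
    (Uset : Set (Euc m)) (Dset : Set (Euc l))
    (φ : Euc n → (ℝ → Euc m) → (ℝ → Euc l) → ℝ → Euc n) : Set (Euc n) :=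
  {x | ∀ ε > (0 : ℝ), ∀ T ≥ (0 : ℝ), ∀ β ∈ NAStrategies Uset Dset,
    ∃ u ∈ Controls Uset, ∀ t ∈ Icc (0 : ℝ) T, h (φ x u (β u) t) ≤ ε}

/-- The sup-inf Hamiltonian `H⁻(x, p) = sup_{d ∈ D} inf_{u ∈ U} p ⬝ f(x, u, d)`. -/
def Hminus (f : Euc n → Euc m → Euc l → Euc n)
    (Uset : Set (Euc m)) (Dset : Set (Euc l)) (x p : Euc n) : ℝ :=
  ⨆ d : ↥Dset, ⨅ u : ↥Uset, (inner ℝ p (f x u.1 d.1) : ℝ)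

/-- The inf-sup Hamiltonian `H⁺(x, p) = inf_{u ∈ U} sup_{d ∈ D} p ⬝ f(x, u, d)`. -/
def Hplus (f : Euc n → Euc m → Euc l → Euc n)
    (Uset : Set (Euc m)) (Dset : Set (Euc l)) (x p : Euc n) : ℝ :=
  ⨅ u : ↥Uset, ⨆ d : ↥Dset, (inner ℝ p (f x u.1 d.1) : ℝ)

/-- A bounded continuous function `V` is a viscosity supersolution of
`min{γ V(x) - H(x, ∂V/∂x), V(x) - h(x)} = 0`. -/
def IsViscositySupersolution (γ : ℝ) (H : Euc n → Euc n → ℝ)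
    (h V : Euc n → ℝ) : Prop :=
  Continuous V ∧ (∃ M : ℝ, ∀ x, |V x| ≤ M) ∧
    ∀ v : Euc n → ℝ, ContDiff ℝ (⊤ : ℕ∞) v → ∀ x₀ : Euc n,
      IsLocalMin (fun x => V x - v x) x₀ →
        0 ≤ min (γ * V x₀ - H x₀ (gradient v x₀)) (V x₀ - h x₀)

/-- A bounded continuous function `V` is a viscosity subsolution of
`min{γ V(x) - H(x, ∂V/∂x), V(x) - h(x)} = 0`. -/
def IsViscositySubsolution (γ : ℝ) (H : Euc n → Euc n → ℝ)
    (h V : Euc n → ℝ) : Prop :=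
  Continuous V ∧ (∃ M : ℝ, ∀ x, |V x| ≤ M) ∧
    ∀ v : Euc n → ℝ, ContDiff ℝ (⊤ : ℕ∞) v → ∀ x₀ : Euc n,
      IsLocalMax (fun x => V x - v x) x₀ →
        min (γ * V x₀ - H x₀ (gradient v x₀)) (V x₀ - h x₀) ≤ 0

namespace DPP

/-- shift of a control by `t`. -/
def shiftc {E : Type*} (t : ℝ) (c : ℝ → E) : ℝ → E := fun s => c (s + t)

/-- concatenation of controls at time `t`. -/
def catc {E : Type*} (t : ℝ) (c c' : ℝ → E) : ℝ → E :=
  fun s => if s < t then c s else c' (s - t)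

section Basic

variable (f : Euc n → Euc m → Euc l → Euc n) (Uset : Set (Euc m)) (Dset : Set (Euc l))

/-- The "trajectory structure" predicate: `Y` starting at `z` driven by `(u,d)` is a genuine
solution on the interval `S` (of the form `[0,∞)` or `[0,T)`) and `S` is maximal. -/
def Traj (z : Euc n) (u : ℝ → Euc m) (d : ℝ → Euc l) (Y : ℝ → Euc n) (S : Set ℝ) : Prop :=
  (S = Ici 0 ∨ ∃ T : ℝ, 0 < T ∧ S = Ico 0 T) ∧
  (∀ σ ∈ S, IntegrableOn (fun s => f (Y s) (u s) (d s)) (Ioc 0 σ) volume ∧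
      Y σ = z + ∫ s in Ioc 0 σ, f (Y s) (u s) (d s)) ∧
  (∀ σ : ℝ, 0 ≤ σ → σ ∉ S → ¬ IntegrableOn (fun s => f (Y s) (u s) (d s)) (Ioc 0 σ) volume)

lemma Traj.zero_mem {z u d Y S} (h : Traj f z u d Y S) : (0:ℝ) ∈ S := by
  rcases h.1 with h1 | ⟨T, hT, h1⟩ <;> subst h1
  · exact self_mem_Ici
  · exact ⟨le_refl 0, hT⟩

lemma Traj.nonneg_of_mem {z u d Y S} (h : Traj f z u d Y S) {σ : ℝ} (hσ : σ ∈ S) : 0 ≤ σ := by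
  rcases h.1 with h1 | ⟨T, hT, h1⟩ <;> subst h1
  · exact hσ
  · exact hσ.1

lemma Traj.mem_of_le {z u d Y S} (h : Traj f z u d Y S) {σ τ : ℝ} (hσ : σ ∈ S)
    (h0 : 0 ≤ τ) (hτ : τ ≤ σ) : τ ∈ S := by
  rcases h.1 with h1 | ⟨T, hT, h1⟩ <;> subst h1
  · exact h0
  · exact ⟨h0, lt_of_le_of_lt hτ hσ.2⟩

lemma Traj.apply_zero {z u d Y S} (h : Traj f z u d Y S) : Y 0 = z := by
  have := (h.2.1 0 (h.zero_mem f)).2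
  simpa using this

/-- measurability of the composite integrand. -/
lemma aesm_comp (hfc : ContinuousOnUD f Uset Dset)
    {u : ℝ → Euc m} {d : ℝ → Euc l} (hu : u ∈ Controls Uset) (hd : d ∈ Controls Dset)
    {X : ℝ → Euc n} {s : Set ℝ} (hX : AEMeasurable X (volume.restrict s)) :
    AEStronglyMeasurable (fun τ => f (X τ) (u τ) (d τ)) (volume.restrict s) := by
  obtain ⟨X', hX'm, hX'ae⟩ := hX
  have hmem : ∀ τ, ((X' τ, u τ, d τ) : Euc n × Euc m × Euc l) ∈
      (univ ×ˢ Uset ×ˢ Dset : Set (Euc n × Euc m × Euc l)) := by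
    intro τ; exact ⟨mem_univ _, hu.2 τ, hd.2 τ⟩
  have hg : Continuous ((univ ×ˢ Uset ×ˢ Dset : Set (Euc n × Euc m × Euc l)).restrict
      (fun q : Euc n × Euc m × Euc l => f q.1 q.2.1 q.2.2)) :=
    continuousOn_iff_continuous_restrict.1 hfc
  have hcomp : Measurable (fun τ => f (X' τ) (u τ) (d τ)) := by
    have h1 : Measurable (fun τ => (⟨(X' τ, u τ, d τ), hmem τ⟩ :
        ↥(univ ×ˢ Uset ×ˢ Dset : Set (Euc n × Euc m × Euc l)))) :=
      (hX'm.prodMk (hu.1.prodMk hd.1)).subtype_mk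
    exact hg.measurable.comp h1
  refine (hcomp.aestronglyMeasurable).congr ?_
  filter_upwards [hX'ae] with τ hτ
  rw [hτ]

/-- boundedness of `f` on a compact set of states. -/
lemma f_bound (hfc : ContinuousOnUD f Uset Dset) (hU : IsCompact Uset) (hD : IsCompact Dset)
    {C : Set (Euc n)} (hC : IsCompact C) :
    ∃ B : ℝ, ∀ z ∈ C, ∀ a ∈ Uset, ∀ b ∈ Dset, ‖f z a b‖ ≤ B := by
  have hcomp : IsCompact (C ×ˢ Uset ×ˢ Dset) := hC.prod (hU.prod hD)
  have hcont : ContinuousOn (fun q : Euc n × Euc m × Euc l => f q.1 q.2.1 q.2.2)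
      (C ×ˢ Uset ×ˢ Dset) := hfc.mono (by
    intro q hq; exact ⟨mem_univ _, hq.2⟩)
  obtain ⟨B, hB⟩ := hcomp.exists_bound_of_continuousOn hcont
  exact ⟨B, fun z hz a ha b hb => hB (z, a, b) ⟨hz, ha, hb⟩⟩

end Basic

end DPP

namespace DPP

section Struct

variable {f : Euc n → Euc m → Euc l → Euc n} {Uset : Set (Euc m)} {Dset : Set (Euc l)}
  {φ : Euc n → (ℝ → Euc m) → (ℝ → Euc l) → ℝ → Euc n}

/-- The set of good times for the trajectory `φ x u d`. -/
def SS (f : Euc n → Euc m → Euc l → Euc n)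
    (φ : Euc n → (ℝ → Euc m) → (ℝ → Euc l) → ℝ → Euc n)
    (x : Euc n) (u : ℝ → Euc m) (d : ℝ → Euc l) : Set ℝ :=
  {t : ℝ | 0 ≤ t ∧ IntegrableOn (fun s => f (φ x u d s) (u s) (d s)) (Ioc 0 t) volume}

variable (hφ : IsTrajectory f Uset Dset φ) (hfc : ContinuousOnUD f Uset Dset)
  (hU : IsCompact Uset) (hD : IsCompact Dset)
  {x : Euc n} {u : ℝ → Euc m} {d : ℝ → Euc l}
  (hu : u ∈ Controls Uset) (hd : d ∈ Controls Dset)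

include hφ hu hd in
lemma eq_of_mem_SS {t : ℝ} (ht : t ∈ SS f φ x u d) :
    φ x u d t = x + ∫ s in Ioc 0 t, f (φ x u d s) (u s) (d s) := by
  have h := hφ x u hu d hd t ht.1
  rwa [intervalIntegral.integral_of_le ht.1] at h

include hφ hu hd in
lemma eq_of_not_mem_SS {t : ℝ} (ht0 : 0 ≤ t) (ht : t ∉ SS f φ x u d) :
    φ x u d t = x := by
  have h := hφ x u hu d hd t ht0
  have hni : ¬ IntervalIntegrable (fun s => f (φ x u d s) (u s) (d s)) volume 0 t := by
    rw [intervalIntegrable_iff_integrableOn_Ioc_of_le ht0]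
    intro hc; exact ht ⟨ht0, hc⟩
  rw [intervalIntegral.integral_undef hni, add_zero] at h
  exact h

lemma SS_mem_of_le {t t' : ℝ} (ht : t ∈ SS f φ x u d) (h0 : 0 ≤ t') (hle : t' ≤ t) :
    t' ∈ SS f φ x u d :=
  ⟨h0, ht.2.mono_set (Ioc_subset_Ioc le_rfl hle)⟩

lemma zero_mem_SS : (0:ℝ) ∈ SS f φ x u d := by
  refine ⟨le_refl 0, ?_⟩
  simp [IntegrableOn]

include hfc hU hD hu hd in
/-- `SS` cannot have a maximum: if `c ∈ SS` and everything beyond `c` is frozen,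
the integrand is integrable a bit further. -/
lemma SS_no_max {c : ℝ} (hc : c ∈ SS f φ x u d)
    (hfreeze : ∀ τ : ℝ, c < τ → φ x u d τ = x) {t : ℝ} (hct : c < t) :
    t ∈ SS f φ x u d := by
  obtain ⟨B, hB⟩ := f_bound f Uset Dset hfc hU hD (isCompact_singleton (x := x))
  refine ⟨le_trans hc.1 (le_of_lt hct), ?_⟩
  have hsplit : Ioc (0:ℝ) t = Ioc 0 c ∪ Ioc c t := (Ioc_union_Ioc_eq_Ioc hc.1 hct.le).symm
  rw [hsplit]
  refine hc.2.union ?_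
  -- on `Ioc c t` the trajectory is frozen at `x`
  have haem : AEMeasurable (fun _ : ℝ => x) (volume.restrict (Ioc c t)) := aemeasurable_const
  have hmeas := aesm_comp f Uset Dset hfc hu hd (X := fun _ => x) (s := Ioc c t) haem
  have hcongr : ∀ s ∈ Ioc c t, f (φ x u d s) (u s) (d s) = f x (u s) (d s) := by
    intro s hs; rw [hfreeze s hs.1]
  have hint : IntegrableOn (fun s => f x (u s) (d s)) (Ioc c t) volume := by
    refine ⟨hmeas, HasFiniteIntegral.restrict_of_bounded (C := B) measure_Ioc_lt_top ?_⟩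
    filter_upwards with s
    exact hB x rfl (u s) (hu.2 s) (d s) (hd.2 s)
  exact hint.congr_fun (fun s hs => (hcongr s hs).symm) measurableSet_Ioc

end Struct
end DPP

namespace DPP

section Struct2

variable {f : Euc n → Euc m → Euc l → Euc n} {Uset : Set (Euc m)} {Dset : Set (Euc l)}
  {φ : Euc n → (ℝ → Euc m) → (ℝ → Euc l) → ℝ → Euc n}
  (hφ : IsTrajectory f Uset Dset φ) (hfc : ContinuousOnUD f Uset Dset)
  (hU : IsCompact Uset) (hD : IsCompact Dset)
  {x : Euc n} {u : ℝ → Euc m} {d : ℝ → Euc l}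
  (hu : u ∈ Controls Uset) (hd : d ∈ Controls Dset)

include hφ hfc hU hD hu hd in
lemma SS_struct :
    SS f φ x u d = Ici 0 ∨ ∃ T : ℝ, 0 < T ∧ SS f φ x u d = Ico 0 T := by
  by_cases hbdd : BddAbove (SS f φ x u d)
  · right
    set T := sSup (SS f φ x u d) with hT
    have h0 : (0:ℝ) ∈ SS f φ x u d := zero_mem_SS
    have hne : (SS f φ x u d).Nonempty := ⟨0, h0⟩
    have hT0 : 0 ≤ T := le_csSup hbdd h0
    have hTnot : T ∉ SS f φ x u d := by
      intro hTin
      have hfreeze : ∀ τ : ℝ, T < τ → φ x u d τ = x := fun τ hτ =>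
        eq_of_not_mem_SS hφ hu hd (le_trans hT0 hτ.le)
          (fun hc => absurd (le_csSup hbdd hc) (not_le.2 hτ))
      have h1 := SS_no_max hfc hU hD hu hd hTin hfreeze (t := T+1) (by linarith)
      have := le_csSup hbdd h1; linarith
    have hTpos : 0 < T := lt_of_le_of_ne hT0 (fun h => hTnot (h ▸ h0))
    refine ⟨T, hTpos, ?_⟩
    ext s; constructor
    · intro hs
      exact ⟨hs.1, lt_of_le_of_ne (le_csSup hbdd hs) (fun h => hTnot (h ▸ hs))⟩
    · rintro ⟨hs0, hsT⟩
      obtain ⟨a, ha, hsa⟩ := exists_lt_of_lt_csSup hne hsT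
      exact SS_mem_of_le ha hs0 hsa.le
  · left
    ext s; simp only [mem_Ici]; constructor
    · intro hs; exact hs.1
    · intro hs
      obtain ⟨a, ha, hsa⟩ := not_bddAbove_iff.1 hbdd s
      exact SS_mem_of_le ha hs hsa.le

include hφ hfc hU hD hu hd in
lemma traj_SS : Traj f x u d (φ x u d) (SS f φ x u d) := by
  refine ⟨SS_struct hφ hfc hU hD hu hd, ?_, ?_⟩
  · intro σ hσ; exact ⟨hσ.2, eq_of_mem_SS hφ hu hd hσ⟩
  · intro σ h0 hσ hc; exact hσ ⟨h0, hc⟩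

end Struct2

section TrajCont

variable {f : Euc n → Euc m → Euc l → Euc n}

lemma Traj.continuousOn {z u d Y S} (h : Traj f z u d Y S) {b : ℝ} (hb : b ∈ S) :
    ContinuousOn Y (Icc 0 b) := by
  have hb0 : 0 ≤ b := h.nonneg_of_mem f hb
  have hint : IntegrableOn (fun s => f (Y s) (u s) (d s)) (Icc 0 b) volume :=
    (integrableOn_Icc_iff_integrableOn_Ioc enorm_ne_top).2 (h.2.1 b hb).1
  have hcont := intervalIntegral.continuousOn_primitive (a := 0) (b := b)
    (f := fun s => f (Y s) (u s) (d s)) hint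
  refine (((continuousOn_const : ContinuousOn (fun _ : ℝ => z) (Icc 0 b)).add hcont).congr) ?_
  intro σ hσ
  exact (h.2.1 σ (h.mem_of_le f hb hσ.1 hσ.2)).2

end TrajCont

end DPP

namespace DPP

section Comparison

variable {f : Euc n → Euc m → Euc l → Euc n} {Uset : Set (Euc m)} {Dset : Set (Euc l)}

set_option maxHeartbeats 1000000 in
/-- The fundamental comparison (uniqueness) lemma. -/
lemma comparison (hfl : LocLipschitzUniformly f Uset Dset)
    {z : Euc n} {u₁ u₂ : ℝ → Euc m} {d₁ d₂ : ℝ → Euc l} {Y₁ Y₂ : ℝ → Euc n} {S₁ S₂ : Set ℝ}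
    (hu₁ : u₁ ∈ Controls Uset) (hd₁ : d₁ ∈ Controls Dset)
    (h₁ : Traj f z u₁ d₁ Y₁ S₁) (h₂ : Traj f z u₂ d₂ Y₂ S₂)
    {b σ₀ : ℝ} (hb : b ∈ S₁) (hbσ : b ≤ σ₀)
    (hu : ∀ᵐ s ∂(volume.restrict (Icc (0:ℝ) σ₀)), u₁ s = u₂ s)
    (hd : ∀ᵐ s ∂(volume.restrict (Icc (0:ℝ) σ₀)), d₁ s = d₂ s) :
    b ∈ S₂ ∧ ∀ σ ∈ Icc (0:ℝ) b, Y₁ σ = Y₂ σ := by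
  classical
  set F₁ : ℝ → Euc n := fun s => f (Y₁ s) (u₁ s) (d₁ s) with hF₁
  set F₂ : ℝ → Euc n := fun s => f (Y₂ s) (u₂ s) (d₂ s) with hF₂
  have hb0 : 0 ≤ b := h₁.nonneg_of_mem f hb
  set A := {a : ℝ | a ∈ Icc 0 b ∧ a ∈ S₂ ∧ ∀ σ ∈ Icc (0:ℝ) a, Y₁ σ = Y₂ σ} with hA
  have h0A : 0 ∈ A := by
    refine ⟨⟨le_rfl, hb0⟩, h₂.zero_mem f, ?_⟩
    intro σ hσ
    have : σ = 0 := le_antisymm hσ.2 hσ.1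
    subst this
    rw [h₁.apply_zero f, h₂.apply_zero f]
  have hbddA : BddAbove A := ⟨b, fun a ha => ha.1.2⟩
  have hneA : A.Nonempty := ⟨0, h0A⟩
  set c := sSup A with hc
  have hcIcc : c ∈ Icc (0:ℝ) b := ⟨le_csSup hbddA h0A, csSup_le hneA (fun a ha => ha.1.2)⟩
  have heq_lt : ∀ σ : ℝ, 0 ≤ σ → σ < c → Y₁ σ = Y₂ σ := by
    intro σ h0σ hσc
    obtain ⟨a, haA, hσa⟩ := exists_lt_of_lt_csSup hneA hσc
    exact haA.2.2 σ ⟨h0σ, hσa.le⟩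
  have hcS₁ : c ∈ S₁ := h₁.mem_of_le f hb hcIcc.1 hcIcc.2
  have hF₁int : IntegrableOn F₁ (Ioc 0 c) volume := (h₁.2.1 c hcS₁).1
  -- transfer a.e. control agreement to `Ioc 0 c`
  have hsub : Ioc (0:ℝ) c ⊆ Icc (0:ℝ) σ₀ := fun s hs =>
    ⟨hs.1.le, le_trans hs.2 (le_trans hcIcc.2 hbσ)⟩
  have hmono : volume.restrict (Ioc (0:ℝ) c) ≤ volume.restrict (Icc (0:ℝ) σ₀) :=
    Measure.restrict_mono hsub le_rfl
  have hu' : ∀ᵐ s ∂(volume.restrict (Ioc (0:ℝ) c)), u₁ s = u₂ s := ae_mono hmono hu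
  have hd' : ∀ᵐ s ∂(volume.restrict (Ioc (0:ℝ) c)), d₁ s = d₂ s := ae_mono hmono hd
  have hmemae : ∀ᵐ s ∂(volume.restrict (Ioc (0:ℝ) c)), s ∈ Ioc (0:ℝ) c :=
    ae_restrict_mem measurableSet_Ioc
  have hne_c : ∀ᵐ s ∂(volume.restrict (Ioc (0:ℝ) c)), s ≠ c := by
    rw [ae_iff]
    have hset : {s : ℝ | ¬ s ≠ c} = {c} := by ext s; simp
    rw [hset]
    exact le_antisymm (le_trans (Measure.restrict_apply_le _ _) (by simp)) zero_le
  have haeeq : F₁ =ᵐ[volume.restrict (Ioc (0:ℝ) c)] F₂ := by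
    filter_upwards [hu', hd', hmemae, hne_c] with s hs1 hs2 hsm hsc
    have hslt : s < c := lt_of_le_of_ne hsm.2 hsc
    simp only [hF₁, hF₂]
    rw [← hs1, ← hs2, heq_lt s hsm.1.le hslt]
  have hF₂int : IntegrableOn F₂ (Ioc 0 c) volume := (Integrable.congr hF₁int haeeq : _)
  have hcS₂ : c ∈ S₂ := by
    by_contra hcn
    exact (h₂.2.2 c hcIcc.1 hcn) hF₂int
  have hYc : Y₁ c = Y₂ c := by
    rw [(h₁.2.1 c hcS₁).2, (h₂.2.1 c hcS₂).2, integral_congr_ae haeeq]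
  have hceqIcc : ∀ σ ∈ Icc (0:ℝ) c, Y₁ σ = Y₂ σ := by
    intro σ hσ
    rcases eq_or_lt_of_le hσ.2 with h | h
    · subst h; exact hYc
    · exact heq_lt σ hσ.1 h
  -- now show c = b
  rcases eq_or_lt_of_le hcIcc.2 with hcb | hcb
  · exact ⟨hcb ▸ hcS₂, hcb ▸ hceqIcc⟩
  exfalso
  -- room beyond `c` in both `S₁` and `S₂`
  have hroom : ∃ e : ℝ, c < e ∧ e ≤ b ∧ e ∈ S₂ ∧ e ∈ S₁ := by
    rcases h₂.1 with hS | ⟨T, hT, hS⟩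
    · exact ⟨b, hcb, le_rfl, by rw [hS]; exact hb0, hb⟩
    · have hcT : c < T := by rw [hS] at hcS₂; exact hcS₂.2
      refine ⟨min b ((c+T)/2), lt_min hcb (by linarith), min_le_left _ _, ?_, ?_⟩
      · rw [hS]
        exact ⟨le_trans hcIcc.1 (le_min hcb.le (by linarith)),
          lt_of_le_of_lt (min_le_right _ _) (by linarith)⟩
      · exact h₁.mem_of_le f hb (le_trans hcIcc.1 (le_min hcb.le (by linarith)))
          (min_le_left _ _)
  obtain ⟨e, hce, heb, heS₂, heS₁⟩ := hroom
  have hcont₁ : ContinuousOn Y₁ (Icc 0 e) := h₁.continuousOn heS₁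
  have hcont₂ : ContinuousOn Y₂ (Icc 0 e) := h₂.continuousOn heS₂
  obtain ⟨K, r, hr, hlip⟩ := hfl (Y₁ c)
  set K' : ℝ := (K : ℝ) + 1 with hK'
  have hK'pos : 0 < K' := by positivity
  have hcmem : c ∈ Icc (0:ℝ) e := ⟨hcIcc.1, hce.le⟩
  -- choose δ
  have hcw₁ : ContinuousWithinAt Y₁ (Icc 0 e) c := hcont₁ c hcmem
  have hcw₂ : ContinuousWithinAt Y₂ (Icc 0 e) c := hcont₂ c hcmem
  obtain ⟨δ₁, hδ₁, hball₁⟩ := Metric.continuousWithinAt_iff.1 hcw₁ r hr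
  obtain ⟨δ₂, hδ₂, hball₂⟩ := Metric.continuousWithinAt_iff.1 hcw₂ r hr
  set δ : ℝ := min (min (δ₁/2) (δ₂/2)) (min (e - c) (1/(2*K'))) with hδdef
  have hδpos : 0 < δ := by
    refine lt_min (lt_min (by linarith) (by linarith)) (lt_min (by linarith) (by positivity))
  have hδe : c + δ ≤ e := by
    have : δ ≤ e - c := le_trans (min_le_right _ _) (min_le_left _ _)
    linarith
  have hδK : δ ≤ 1/(2*K') := le_trans (min_le_right _ _) (min_le_right _ _)
  set I := Icc c (c + δ) with hI
  have hIsub : I ⊆ Icc (0:ℝ) e := fun s hs => ⟨le_trans hcIcc.1 hs.1, le_trans hs.2 hδe⟩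
  have hball : ∀ s ∈ I, Y₁ s ∈ Metric.ball (Y₁ c) r ∧ Y₂ s ∈ Metric.ball (Y₁ c) r := by
    intro s hs
    have hdist : dist s c < δ₁ ∧ dist s c < δ₂ := by
      have h1 : dist s c = s - c := by
        rw [Real.dist_eq, abs_of_nonneg (by linarith [hs.1])]
      constructor
      · rw [h1]
        have : δ ≤ δ₁/2 := le_trans (min_le_left _ _) (min_le_left _ _)
        have := hs.2; linarith
      · rw [h1]
        have : δ ≤ δ₂/2 := le_trans (min_le_left _ _) (min_le_right _ _)
        have := hs.2; linarith
    constructor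
    · exact Metric.mem_ball.2 (hball₁ (hIsub hs) hdist.1)
    · rw [Metric.mem_ball, ← hYc] at *
      exact lt_of_le_of_lt (le_of_eq (by rw [hYc])) (by rw [hYc]; exact hball₂ (hIsub hs) hdist.2)
  -- the sup-norm function
  set w : ℝ → ℝ := fun s => ‖Y₁ s - Y₂ s‖ with hw
  have hwcont : ContinuousOn w I := ((hcont₁.sub hcont₂).mono hIsub).norm
  have hInonempty : I.Nonempty := ⟨c, ⟨le_rfl, by linarith⟩⟩
  obtain ⟨sm, hsmI, hsmax⟩ := isCompact_Icc.exists_isMaxOn hInonempty hwcont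
  have hwnonneg : 0 ≤ w sm := norm_nonneg _
  -- integral equation on `[c, σ]` for σ ∈ I
  have hFint₁ : IntegrableOn F₁ (Ioc 0 e) volume := (h₁.2.1 e heS₁).1
  have hFint₂ : IntegrableOn F₂ (Ioc 0 e) volume := (h₂.2.1 e heS₂).1
  have hseg : ∀ σ ∈ I, Y₁ σ - Y₂ σ = ∫ s in Ioc c σ, (F₁ s - F₂ s) := by
    intro σ hσ
    have hσS₁ : σ ∈ S₁ := h₁.mem_of_le f heS₁ (le_trans hcIcc.1 hσ.1) (le_trans hσ.2 hδe)
    have hσS₂ : σ ∈ S₂ := h₂.mem_of_le f heS₂ (le_trans hcIcc.1 hσ.1) (le_trans hσ.2 hδe)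
    have hsplit : Ioc (0:ℝ) σ = Ioc 0 c ∪ Ioc c σ := (Ioc_union_Ioc_eq_Ioc hcIcc.1 hσ.1).symm
    have hdisj : Disjoint (Ioc (0:ℝ) c) (Ioc c σ) := by
      refine Set.disjoint_left.2 (fun s hs hs' => ?_)
      exact absurd hs.2 (not_le.2 hs'.1)
    have hi₁ : Y₁ σ = z + ((∫ s in Ioc 0 c, F₁ s) + ∫ s in Ioc c σ, F₁ s) := by
      rw [(h₁.2.1 σ hσS₁).2, hsplit,
        setIntegral_union hdisj measurableSet_Ioc
          (hFint₁.mono_set (Ioc_subset_Ioc le_rfl hce.le))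
          (hFint₁.mono_set (Ioc_subset_Ioc hcIcc.1 (le_trans hσ.2 hδe)))]
    have hi₂ : Y₂ σ = z + ((∫ s in Ioc 0 c, F₂ s) + ∫ s in Ioc c σ, F₂ s) := by
      rw [(h₂.2.1 σ hσS₂).2, hsplit,
        setIntegral_union hdisj measurableSet_Ioc
          (hFint₂.mono_set (Ioc_subset_Ioc le_rfl hce.le))
          (hFint₂.mono_set (Ioc_subset_Ioc hcIcc.1 (le_trans hσ.2 hδe)))]
    have hind : ∫ s in Ioc (0:ℝ) c, F₁ s = ∫ s in Ioc (0:ℝ) c, F₂ s := integral_congr_ae haeeq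
    have hdiff : Y₁ σ - Y₂ σ = (∫ s in Ioc c σ, F₁ s) - ∫ s in Ioc c σ, F₂ s := by
      rw [hi₁, hi₂, hind]; abel
    rw [hdiff, ← integral_sub
      (hFint₁.mono_set (Ioc_subset_Ioc hcIcc.1 (le_trans hσ.2 hδe)))
      (hFint₂.mono_set (Ioc_subset_Ioc hcIcc.1 (le_trans hσ.2 hδe)))]
  -- pointwise a.e. bound on Ioc c σ for σ ∈ I
  have hptbound : ∀ σ ∈ I, ∀ᵐ s ∂(volume.restrict (Ioc c σ)), ‖F₁ s - F₂ s‖ ≤ K' * w s := by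
    intro σ hσ
    have hsub' : Ioc c σ ⊆ Icc (0:ℝ) σ₀ := fun s hs =>
      ⟨le_trans hcIcc.1 hs.1.le, le_trans hs.2 (le_trans (le_trans hσ.2 hδe)
        (le_trans (le_trans heb hbσ) le_rfl))⟩
    have hmono' : volume.restrict (Ioc c σ) ≤ volume.restrict (Icc (0:ℝ) σ₀) :=
      Measure.restrict_mono hsub' le_rfl
    filter_upwards [ae_mono hmono' hu, ae_mono hmono' hd, ae_restrict_mem measurableSet_Ioc]
      with s hs1 hs2 hsm
    have hsI : s ∈ I := ⟨hsm.1.le, le_trans hsm.2 hσ.2⟩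
    have hb1 := (hball s hsI).1
    have hb2 := (hball s hsI).2
    have hlips := hlip (u₁ s) (hu₁.2 s) (d₁ s) (hd₁.2 s)
    have : dist (f (Y₁ s) (u₁ s) (d₁ s)) (f (Y₂ s) (u₁ s) (d₁ s)) ≤ K * dist (Y₁ s) (Y₂ s) :=
      hlips.dist_le_mul _ hb1 _ hb2
    simp only [hF₁, hF₂]
    rw [← hs1, ← hs2]
    rw [dist_eq_norm, dist_eq_norm] at this
    refine le_trans this ?_
    have : (K:ℝ) ≤ K' := by simp [hK']
    have hwge : (0:ℝ) ≤ ‖Y₁ s - Y₂ s‖ := norm_nonneg _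
    exact mul_le_mul_of_nonneg_right this hwge
  -- key estimate
  have hkey : ∀ σ ∈ I, w σ ≤ K' * δ * w sm := by
    intro σ hσ
    have hFi : IntegrableOn (fun s => F₁ s - F₂ s) (Ioc c σ) volume := by
      have := (hFint₁.mono_set (Ioc_subset_Ioc hcIcc.1 (le_trans hσ.2 hδe))).sub
        (hFint₂.mono_set (Ioc_subset_Ioc hcIcc.1 (le_trans hσ.2 hδe)))
      exact this
    have h1 : w σ ≤ ∫ s in Ioc c σ, ‖F₁ s - F₂ s‖ := by
      rw [hw]; simp only
      rw [hseg σ hσ]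
      exact norm_integral_le_integral_norm _
    have hwint : IntegrableOn (fun s => K' * w s) (Ioc c σ) volume := by
      refine (ContinuousOn.integrableOn_Icc ?_).mono_set Ioc_subset_Icc_self
      exact (continuousOn_const.mul (hwcont.mono (Icc_subset_Icc le_rfl hσ.2)))
    have h2 : ∫ s in Ioc c σ, ‖F₁ s - F₂ s‖ ≤ ∫ s in Ioc c σ, K' * w s :=
      setIntegral_mono_ae_restrict hFi.norm hwint (hptbound σ hσ)
    have h3 : ∫ s in Ioc c σ, K' * w s ≤ ∫ s in Ioc c σ, K' * w sm := by
      refine setIntegral_mono_on hwint (integrableOn_const measure_Ioc_lt_top.ne)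
        measurableSet_Ioc ?_
      intro s hs
      have hsI : s ∈ I := ⟨hs.1.le, le_trans hs.2 hσ.2⟩
      have := hsmax hsI
      have hK'nn : 0 ≤ K' := hK'pos.le
      exact mul_le_mul_of_nonneg_left this hK'nn
    have h4 : ∫ s in Ioc c σ, K' * w sm ∂volume = (σ - c) * (K' * w sm) ∨
        σ < c := by
      by_cases hcσ : c ≤ σ
      · left
        rw [setIntegral_const, Real.volume_real_Ioc_of_le hcσ, smul_eq_mul]
      · right; exact lt_of_not_ge hcσ
    rcases h4 with h4 | h4
    · have h5 : (σ - c) * (K' * w sm) ≤ δ * (K' * w sm) := by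
        have hσc : σ - c ≤ δ := by have := hσ.2; linarith
        have : 0 ≤ K' * w sm := mul_nonneg hK'pos.le hwnonneg
        nlinarith
      calc w σ ≤ ∫ s in Ioc c σ, ‖F₁ s - F₂ s‖ := h1
        _ ≤ ∫ s in Ioc c σ, K' * w s := h2
        _ ≤ ∫ s in Ioc c σ, K' * w sm := h3
        _ = (σ - c) * (K' * w sm) := h4
        _ ≤ δ * (K' * w sm) := h5
        _ = K' * δ * w sm := by ring
    · exact absurd hσ.1 (not_le.2 h4)
  -- conclude w ≡ 0 on I
  have hhalf : K' * δ ≤ 1/2 := by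
    rw [hK'] at *
    have h2K : 0 < 2 * K' := by positivity
    calc K' * δ ≤ K' * (1/(2*K')) := mul_le_mul_of_nonneg_left hδK (by positivity)
      _ = 1/2 := by rw [mul_one_div, div_mul_eq_div_div_swap, div_self (ne_of_gt (by linarith))]
  have hwsm : w sm = 0 := by
    have h1 := hkey sm hsmI
    have h2 : w sm ≤ (1/2) * w sm := by
      calc w sm ≤ K' * δ * w sm := h1
        _ ≤ (1/2) * w sm := mul_le_mul_of_nonneg_right hhalf hwnonneg
    linarith
  have hweq : ∀ σ ∈ I, Y₁ σ = Y₂ σ := by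
    intro σ hσ
    have := hsmax hσ
    rw [hwsm] at this
    have : w σ = 0 := le_antisymm this (norm_nonneg _)
    rwa [hw, norm_sub_eq_zero_iff] at this
  -- contradiction with maximality of c
  have hcδA : c + δ ∈ A := by
    refine ⟨⟨by linarith [hcIcc.1], le_trans hδe (le_trans heb le_rfl)⟩, ?_, ?_⟩
    · exact h₂.mem_of_le f heS₂ (by linarith [hcIcc.1]) hδe
    · intro σ hσ
      rcases le_or_gt σ c with h | h
      · exact hceqIcc σ ⟨hσ.1, h⟩
      · exact hweq σ ⟨h.le, hσ.2⟩
  have hfin := le_csSup hbddA hcδA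
  have : c + δ ≤ c := hfin
  linarith

end Comparison

end DPP

namespace DPP

section Shift

variable {f : Euc n → Euc m → Euc l → Euc n} {Uset : Set (Euc m)} {Dset : Set (Euc l)}
  {φ : Euc n → (ℝ → Euc m) → (ℝ → Euc l) → ℝ → Euc n}
  (hφ : IsTrajectory f Uset Dset φ) (hfc : ContinuousOnUD f Uset Dset)
  (hU : IsCompact Uset) (hD : IsCompact Dset) (hfl : LocLipschitzUniformly f Uset Dset)

lemma shiftc_mem_controls {k : ℕ} {A : Set (Euc k)} {c : ℝ → Euc k} (hc : c ∈ Controls A)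
    (t : ℝ) : shiftc t c ∈ Controls A :=
  ⟨hc.1.comp (measurable_add_const t), fun s => hc.2 (s + t)⟩

variable {x : Euc n} {u : ℝ → Euc m} {d : ℝ → Euc l}
  (hu : u ∈ Controls Uset) (hd : d ∈ Controls Dset)

include hφ hfc hU hD hu hd in
/-- The time-shifted trajectory also has trajectory structure. -/
lemma traj_shift {t : ℝ} (ht : t ∈ SS f φ x u d) :
    Traj f (φ x u d t) (shiftc t u) (shiftc t d) (fun σ => φ x u d (σ + t))
      {σ : ℝ | 0 ≤ σ ∧ σ + t ∈ SS f φ x u d} := by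
  set F : ℝ → Euc n := fun s => f (φ x u d s) (u s) (d s) with hF
  have hSS := SS_struct (x := x) hφ hfc hU hD hu hd
  have ht0 : 0 ≤ t := ht.1
  have hiff : ∀ σ : ℝ, 0 ≤ σ →
      (IntegrableOn (fun s => F (s + t)) (Ioc 0 σ) volume ↔
        IntegrableOn F (Ioc t (σ + t)) volume) := by
    intro σ hσ0
    constructor
    · intro hint
      have h1 : IntervalIntegrable (fun s => F (s + t)) volume 0 σ :=
        (intervalIntegrable_iff_integrableOn_Ioc_of_le hσ0).2 hint
      have h2 := h1.comp_add_right (-t)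
      simp only [sub_neg_eq_add, zero_add] at h2
      have h3 : IntervalIntegrable F volume t (σ + t) := by
        have : (fun x : ℝ => F (x + -t + t)) = F := by
          funext x; norm_num
        rw [this] at h2
        exact h2
      exact (intervalIntegrable_iff_integrableOn_Ioc_of_le (by linarith)).1 h3
    · intro hint
      have h1 : IntervalIntegrable F volume t (σ + t) :=
        (intervalIntegrable_iff_integrableOn_Ioc_of_le (by linarith)).2 hint
      have h2 := h1.comp_add_right t
      simp only [sub_self, add_sub_cancel_right] at h2
      exact (intervalIntegrable_iff_integrableOn_Ioc_of_le hσ0).1 h2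
  have hmemiff : ∀ σ : ℝ, 0 ≤ σ →
      ((σ + t ∈ SS f φ x u d) ↔ IntegrableOn (fun s => F (s + t)) (Ioc 0 σ) volume) := by
    intro σ hσ0
    rw [hiff σ hσ0]
    constructor
    · intro hm
      exact hm.2.mono_set (Ioc_subset_Ioc ht0 le_rfl)
    · intro hint
      refine ⟨by linarith, ?_⟩
      rw [← Ioc_union_Ioc_eq_Ioc ht0 (by linarith : t ≤ σ + t)]
      exact ht.2.union hint
  constructor
  · -- interval form
    rcases hSS with hS | ⟨T, hT, hS⟩
    · left
      ext σ; simp only [mem_setOf_eq, mem_Ici]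
      constructor
      · intro hσ; exact hσ.1
      · intro hσ; exact ⟨hσ, by rw [hS]; exact mem_Ici.2 (by linarith)⟩
    · right
      have htT : t < T := by rw [hS] at ht; exact ht.2
      refine ⟨T - t, by linarith, ?_⟩
      ext σ; simp only [mem_setOf_eq, mem_Ico]
      constructor
      · intro hσ
        have := hσ.2; rw [hS] at this
        exact ⟨hσ.1, by have := this.2; linarith⟩
      · intro hσ
        exact ⟨hσ.1, by rw [hS]; exact ⟨by linarith, by linarith [hσ.2]⟩⟩
  constructor
  · -- equation on S
    rintro σ ⟨hσ0, hσSS⟩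
    have hint : IntegrableOn (fun s => F (s + t)) (Ioc 0 σ) volume :=
      (hmemiff σ hσ0).1 hσSS
    refine ⟨hint, ?_⟩
    have heq1 : φ x u d (σ + t) = x + ∫ s in Ioc 0 (σ + t), F s :=
      eq_of_mem_SS hφ hu hd hσSS
    have heqt : φ x u d t = x + ∫ s in Ioc 0 t, F s := eq_of_mem_SS hφ hu hd ht
    have hsplit : Ioc (0:ℝ) (σ + t) = Ioc 0 t ∪ Ioc t (σ + t) :=
      (Ioc_union_Ioc_eq_Ioc ht0 (by linarith)).symm
    have hdisj : Disjoint (Ioc (0:ℝ) t) (Ioc t (σ + t)) :=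
      Set.disjoint_left.2 (fun s hs hs' => absurd hs.2 (not_le.2 hs'.1))
    have hint2 : IntegrableOn F (Ioc t (σ + t)) volume := (hiff σ hσ0).1 hint
    have hchg : ∫ s in Ioc 0 σ, F (s + t) = ∫ s in Ioc t (σ + t), F s := by
      rw [← intervalIntegral.integral_of_le hσ0, ← intervalIntegral.integral_of_le
        (by linarith : t ≤ σ + t)]
      have := intervalIntegral.integral_comp_add_right (a := 0) (b := σ) (d := t) F
      simpa using this
    calc φ x u d (σ + t) = x + ∫ s in Ioc 0 (σ + t), F s := heq1
      _ = x + ((∫ s in Ioc 0 t, F s) + ∫ s in Ioc t (σ + t), F s) := by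
          rw [hsplit, setIntegral_union hdisj measurableSet_Ioc ht.2 hint2]
      _ = (x + ∫ s in Ioc 0 t, F s) + ∫ s in Ioc t (σ + t), F s := by abel
      _ = φ x u d t + ∫ s in Ioc 0 σ, F (s + t) := by rw [← heqt, hchg]
  · -- maximality
    rintro σ hσ0 hσn hint
    exact hσn ⟨hσ0, (hmemiff σ hσ0).2 hint⟩

end Shift

end DPP

namespace DPP

section Corollaries

variable {f : Euc n → Euc m → Euc l → Euc n} {Uset : Set (Euc m)} {Dset : Set (Euc l)}
  {φ : Euc n → (ℝ → Euc m) → (ℝ → Euc l) → ℝ → Euc n}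
  (hφ : IsTrajectory f Uset Dset φ) (hfc : ContinuousOnUD f Uset Dset)
  (hU : IsCompact Uset) (hD : IsCompact Dset) (hfl : LocLipschitzUniformly f Uset Dset)

include hφ hfc hU hD hfl in
/-- Locality: trajectories only depend on the controls up to time `σ₀` (a.e.), and so do
the sets of good times. -/
lemma locality {x : Euc n} {u₁ u₂ : ℝ → Euc m} {d₁ d₂ : ℝ → Euc l}
    (hu₁ : u₁ ∈ Controls Uset) (hd₁ : d₁ ∈ Controls Dset)
    (hu₂ : u₂ ∈ Controls Uset) (hd₂ : d₂ ∈ Controls Dset)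
    {σ₀ : ℝ} (hau : AgreeAE u₁ u₂ σ₀) (had : AgreeAE d₁ d₂ σ₀) :
    ∀ τ ∈ Icc (0:ℝ) σ₀,
      φ x u₁ d₁ τ = φ x u₂ d₂ τ ∧ (τ ∈ SS f φ x u₁ d₁ ↔ τ ∈ SS f φ x u₂ d₂) := by
  intro τ hτ
  have T₁ := traj_SS (x := x) hφ hfc hU hD hu₁ hd₁
  have T₂ := traj_SS (x := x) hφ hfc hU hD hu₂ hd₂
  have hau' : ∀ᵐ s ∂(volume.restrict (Icc (0:ℝ) σ₀)), u₂ s = u₁ s := by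
    filter_upwards [hau] with s hs; exact hs.symm
  have had' : ∀ᵐ s ∂(volume.restrict (Icc (0:ℝ) σ₀)), d₂ s = d₁ s := by
    filter_upwards [had] with s hs; exact hs.symm
  by_cases hmem : τ ∈ SS f φ x u₁ d₁
  · obtain ⟨hmem₂, heq⟩ := comparison hfl hu₁ hd₁ T₁ T₂ hmem hτ.2 hau had
    exact ⟨heq τ ⟨hτ.1, le_rfl⟩, ⟨fun _ => hmem₂, fun _ => hmem⟩⟩
  · have hmem₂ : τ ∉ SS f φ x u₂ d₂ := by
      intro hc
      exact hmem (comparison hfl hu₂ hd₂ T₂ T₁ hc hτ.2 hau' had').1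
    rw [eq_of_not_mem_SS hφ hu₁ hd₁ hτ.1 hmem, eq_of_not_mem_SS hφ hu₂ hd₂ hτ.1 hmem₂]
    exact ⟨rfl, ⟨fun hc => absurd hc hmem, fun hc => absurd hc hmem₂⟩⟩

include hφ hfc hU hD hfl in
/-- Shift: relation between the trajectory after time `t` and the restarted trajectory. -/
lemma shift_lemma {x : Euc n} {u : ℝ → Euc m} {d : ℝ → Euc l}
    (hu : u ∈ Controls Uset) (hd : d ∈ Controls Dset)
    {t : ℝ} (ht : t ∈ SS f φ x u d) {s : ℝ} (hs : 0 ≤ s) :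
    (s + t ∈ SS f φ x u d →
      φ (φ x u d t) (shiftc t u) (shiftc t d) s = φ x u d (s + t)) ∧
    (s + t ∉ SS f φ x u d →
      φ (φ x u d t) (shiftc t u) (shiftc t d) s = φ x u d t) := by
  have Tsh := traj_shift hφ hfc hU hD hu hd ht
  have Ty := traj_SS (x := φ x u d t) hφ hfc hU hD
    (shiftc_mem_controls hu t) (shiftc_mem_controls hd t)
  have htriv_u : ∀ᵐ σ ∂(volume.restrict (Icc (0:ℝ) s)), shiftc t u σ = shiftc t u σ :=
    Filter.Eventually.of_forall (fun _ => rfl)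
  have htriv_d : ∀ᵐ σ ∂(volume.restrict (Icc (0:ℝ) s)), shiftc t d σ = shiftc t d σ :=
    Filter.Eventually.of_forall (fun _ => rfl)
  constructor
  · intro hmem
    obtain ⟨hm2, heq⟩ := comparison hfl (shiftc_mem_controls hu t) (shiftc_mem_controls hd t)
      Tsh Ty (b := s) (σ₀ := s) ⟨hs, hmem⟩ le_rfl htriv_u htriv_d
    exact (heq s ⟨hs, le_rfl⟩).symm
  · intro hmem
    have hnot : s ∉ SS f φ (φ x u d t) (shiftc t u) (shiftc t d) := by
      intro hc
      obtain ⟨hm1, _⟩ := comparison hfl (shiftc_mem_controls hu t) (shiftc_mem_controls hd t)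
        Ty Tsh (b := s) (σ₀ := s) hc le_rfl htriv_u htriv_d
      exact hmem hm1.2
    exact eq_of_not_mem_SS hφ (shiftc_mem_controls hu t) (shiftc_mem_controls hd t) hs hnot

include hφ hfc hU hD hfl in
/-- Freeze: beyond the good set, the trajectory sits at `x`. (restate for convenience) -/
lemma freeze_off {x : Euc n} {u : ℝ → Euc m} {d : ℝ → Euc l}
    (hu : u ∈ Controls Uset) (hd : d ∈ Controls Dset)
    {t τ : ℝ} (ht : t ∉ SS f φ x u d) (hτ : t ≤ τ) (ht0 : 0 ≤ t) :
    φ x u d τ = x := by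
  refine eq_of_not_mem_SS hφ hu hd (le_trans ht0 hτ) (fun hc => ht ?_)
  exact SS_mem_of_le hc ht0 hτ

end Corollaries

end DPP
namespace DPP

instance : Nonempty ↥(Ici (0:ℝ)) := ⟨⟨0, mem_Ici.2 (le_refl 0)⟩⟩

section Payoff

variable {h : Euc n → ℝ} {γ : ℝ} {M : ℝ}
  {φ : Euc n → (ℝ → Euc m) → (ℝ → Euc l) → ℝ → Euc n}
  (hγ : 0 < γ) (hM : ∀ z, |h z| ≤ M)

/-- the running supremum up to time `t`. -/
def runv (h : Euc n → ℝ) (γ : ℝ)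
    (φ : Euc n → (ℝ → Euc m) → (ℝ → Euc l) → ℝ → Euc n)
    (t : ℝ) (x : Euc n) (u : ℝ → Euc m) (d : ℝ → Euc l) : ℝ :=
  ⨆ τ : Icc (0 : ℝ) t, Real.exp (-γ * τ.1) * h (φ x u d τ.1)

include hγ hM in
lemma term_le {x u d} {τ : ℝ} (hτ : 0 ≤ τ) :
    Real.exp (-γ * τ) * h (φ x u d τ) ≤ M := by
  have h1 : Real.exp (-γ * τ) ≤ 1 := Real.exp_le_one_iff.2 (by nlinarith)
  have h2 : h (φ x u d τ) ≤ M := le_trans (le_abs_self _) (hM _)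
  have h3 : 0 ≤ M := le_trans (abs_nonneg _) (hM (φ x u d τ))
  have h4 : Real.exp (-γ * τ) * h (φ x u d τ) ≤ Real.exp (-γ * τ) * M :=
    mul_le_mul_of_nonneg_left h2 (Real.exp_nonneg _)
  calc Real.exp (-γ * τ) * h (φ x u d τ) ≤ Real.exp (-γ * τ) * M := h4
    _ ≤ 1 * M := mul_le_mul_of_nonneg_right h1 h3
    _ = M := one_mul M

include hγ hM in
lemma term_ge {x u d} {τ : ℝ} (hτ : 0 ≤ τ) :
    -(M * Real.exp (-γ * τ)) ≤ Real.exp (-γ * τ) * h (φ x u d τ) := by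
  have h2 : -M ≤ h (φ x u d τ) := neg_le_of_abs_le (hM _)
  have := mul_le_mul_of_nonneg_left h2 (Real.exp_nonneg (-γ * τ))
  calc -(M * Real.exp (-γ * τ)) = Real.exp (-γ * τ) * (-M) := by ring
    _ ≤ Real.exp (-γ * τ) * h (φ x u d τ) := this

include hγ hM in
lemma payoff_bddAbove {x u d} :
    BddAbove (range (fun τ : Ici (0:ℝ) => Real.exp (-γ * τ.1) * h (φ x u d τ.1))) := by
  refine ⟨M, ?_⟩
  rintro y ⟨⟨τ, hτ⟩, rfl⟩
  exact term_le hγ hM hτ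

include hγ hM in
lemma term_le_payoff {x u d} {τ : ℝ} (hτ : 0 ≤ τ) :
    Real.exp (-γ * τ) * h (φ x u d τ) ≤ payoff h γ φ x u d :=
  le_ciSup (payoff_bddAbove hγ hM) ⟨τ, hτ⟩

include hγ hM in
lemma payoff_le {x u d} : payoff h γ φ x u d ≤ M :=
  ciSup_le (fun τ => term_le hγ hM τ.2)

include hγ hM in
lemma payoff_nonneg {x u d} : 0 ≤ payoff h γ φ x u d := by
  by_contra hneg
  push_neg at hneg
  set c := -payoff h γ φ x u d with hc
  have hcpos : 0 < c := by simp [hc]; linarith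
  have hM0 : 0 ≤ M := le_trans (abs_nonneg _) (hM (φ x u d 0))
  -- find τ with M * exp (-γ τ) < c
  obtain ⟨τ, hτ0, hτ⟩ : ∃ τ : ℝ, 0 ≤ τ ∧ M * Real.exp (-γ * τ) < c := by
    rcases eq_or_lt_of_le hM0 with hM' | hM'
    · exact ⟨0, le_rfl, by rw [← hM']; simpa using hcpos⟩
    · set τ := max 0 ((-(Real.log (c / M))) / γ + 1) with hτdef
      refine ⟨τ, le_max_left _ _, ?_⟩
      have hexp : Real.exp (-γ * τ) < c / M := by
        rw [← Real.lt_log_iff_exp_lt (by positivity)]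
        have hτge : (-(Real.log (c / M))) / γ + 1 ≤ τ := le_max_right _ _
        have hγτ : γ * ((-(Real.log (c / M))) / γ) = -(Real.log (c/M)) := by
          field_simp
        have := mul_le_mul_of_nonneg_left hτge hγ.le
        nlinarith [this, mul_comm γ (Real.log (c / M))]
      calc M * Real.exp (-γ * τ) < M * (c / M) := by
            exact mul_lt_mul_of_pos_left hexp hM'
        _ = c := by field_simp
  have h1 := term_ge (φ := φ) hγ hM (x := x) (u := u) (d := d) hτ0
  have h2 := term_le_payoff (φ := φ) hγ hM (x := x) (u := u) (d := d) hτ0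
  have hfin : -c < payoff h γ φ x u d := lt_of_lt_of_le (by linarith) (le_trans h1 h2)
  rw [hc, neg_neg] at hfin
  exact lt_irrefl _ hfin

include hγ hM in
lemma runv_bddAbove {t x u d} :
    BddAbove (range (fun τ : Icc (0:ℝ) t => Real.exp (-γ * τ.1) * h (φ x u d τ.1))) := by
  refine ⟨M, ?_⟩
  rintro y ⟨⟨τ, hτ⟩, rfl⟩
  exact term_le hγ hM hτ.1

include hγ hM in
lemma term_le_runv {t x u d} {τ : ℝ} (hτ : τ ∈ Icc (0:ℝ) t) :
    Real.exp (-γ * τ) * h (φ x u d τ) ≤ runv h γ φ t x u d :=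
  le_ciSup (runv_bddAbove hγ hM) ⟨τ, hτ⟩

include hγ hM in
lemma runv_le_payoff {t x u d} (ht : 0 ≤ t) : runv h γ φ t x u d ≤ payoff h γ φ x u d := by
  have : Nonempty ↥(Icc (0:ℝ) t) := ⟨⟨0, le_rfl, ht⟩⟩
  exact ciSup_le (fun τ => term_le_payoff hγ hM τ.2.1)

include hγ hM in
lemma runv_le {t x u d} (ht : 0 ≤ t) : runv h γ φ t x u d ≤ M := by
  have : Nonempty ↥(Icc (0:ℝ) t) := ⟨⟨0, le_rfl, ht⟩⟩
  exact ciSup_le (fun τ => term_le hγ hM τ.2.1)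

/-- congruence for payoffs under pointwise equal trajectories on `[0,∞)`. -/
lemma payoff_congr {x₁ x₂ u₁ d₁ u₂ d₂}
    (hcong : ∀ τ : ℝ, 0 ≤ τ → φ x₁ u₁ d₁ τ = φ x₂ u₂ d₂ τ) :
    payoff h γ φ x₁ u₁ d₁ = payoff h γ φ x₂ u₂ d₂ := by
  unfold payoff
  congr 1
  funext τ
  rw [hcong τ.1 τ.2]

lemma runv_congr {t x₁ x₂ u₁ d₁ u₂ d₂}
    (hcong : ∀ τ ∈ Icc (0:ℝ) t, φ x₁ u₁ d₁ τ = φ x₂ u₂ d₂ τ) :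
    runv h γ φ t x₁ u₁ d₁ = runv h γ φ t x₂ u₂ d₂ := by
  unfold runv
  congr 1
  funext τ
  rw [hcong τ.1 τ.2]

end Payoff

end DPP

namespace DPP

section Split

variable {f : Euc n → Euc m → Euc l → Euc n} {Uset : Set (Euc m)} {Dset : Set (Euc l)}
  {φ : Euc n → (ℝ → Euc m) → (ℝ → Euc l) → ℝ → Euc n}
  {h : Euc n → ℝ} {γ : ℝ} {M : ℝ}
  (hφ : IsTrajectory f Uset Dset φ) (hfc : ContinuousOnUD f Uset Dset)
  (hU : IsCompact Uset) (hD : IsCompact Dset) (hfl : LocLipschitzUniformly f Uset Dset)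
  (hγ : 0 < γ) (hM : ∀ z, |h z| ≤ M)
  {x : Euc n} {u : ℝ → Euc m} {d : ℝ → Euc l}
  (hu : u ∈ Controls Uset) (hd : d ∈ Controls Dset)

include hφ hu hd in
lemma phi_zero : φ x u d 0 = x := by
  have := eq_of_mem_SS hφ hu hd (zero_mem_SS (f := f) (φ := φ) (x := x) (u := u) (d := d))
  simpa using this

include hφ hfc hU hD hfl hγ hM hu hd in
/-- P1 : splitting inequality for the payoff. -/
lemma payoff_split_le {t : ℝ} (ht : 0 ≤ t) :
    payoff h γ φ x u d ≤ max (runv h γ φ t x u d)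
      (Real.exp (-γ * t) * payoff h γ φ (φ x u d t) (shiftc t u) (shiftc t d)) := by
  refine ciSup_le ?_
  rintro ⟨τ, hτ0⟩
  simp only
  rw [mem_Ici] at hτ0
  by_cases hτt : τ ≤ t
  · exact le_max_of_le_left (term_le_runv hγ hM ⟨hτ0, hτt⟩)
  · push_neg at hτt
    by_cases hτSS : τ ∈ SS f φ x u d
    · -- genuine case : τ ∈ SS hence t ∈ SS
      have htSS : t ∈ SS f φ x u d := SS_mem_of_le hτSS ht hτt.le
      have hs0 : 0 ≤ τ - t := by linarith
      have hmem : (τ - t) + t ∈ SS f φ x u d := by rw [sub_add_cancel]; exact hτSS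
      have hsh := (shift_lemma hφ hfc hU hD hfl hu hd htSS hs0).1 hmem
      rw [sub_add_cancel] at hsh
      have hterm := term_le_payoff (φ := φ) hγ hM
        (x := φ x u d t) (u := shiftc t u) (d := shiftc t d) hs0
      rw [hsh] at hterm
      have hexp : Real.exp (-γ * τ) = Real.exp (-γ * t) * Real.exp (-γ * (τ - t)) := by
        rw [← Real.exp_add]; ring_nf
      refine le_max_of_le_right ?_
      calc Real.exp (-γ * τ) * h (φ x u d τ)
          = Real.exp (-γ * t) * (Real.exp (-γ * (τ - t)) * h (φ x u d τ)) := by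
            rw [hexp]; ring
        _ ≤ Real.exp (-γ * t) * payoff h γ φ (φ x u d t) (shiftc t u) (shiftc t d) :=
            mul_le_mul_of_nonneg_left hterm (Real.exp_nonneg _)
    · -- frozen case : the trajectory sits at `x`
      have hXτ : φ x u d τ = x := eq_of_not_mem_SS hφ hu hd hτ0 hτSS
      by_cases hx : 0 ≤ h x
      · refine le_max_of_le_left ?_
        have h0run : Real.exp (-γ * 0) * h (φ x u d 0) ≤ runv h γ φ t x u d :=
          term_le_runv hγ hM ⟨le_rfl, ht⟩
        rw [phi_zero hφ hu hd] at h0run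
        simp only [mul_zero, neg_zero, Real.exp_zero, one_mul] at h0run
        rw [hXτ]
        have hle1 : Real.exp (-γ * τ) ≤ 1 := Real.exp_le_one_iff.2 (by nlinarith)
        calc Real.exp (-γ * τ) * h x ≤ 1 * h x := mul_le_mul_of_nonneg_right hle1 hx
          _ = h x := one_mul _
          _ ≤ runv h γ φ t x u d := h0run
      · push_neg at hx
        refine le_max_of_le_right ?_
        have h1 : Real.exp (-γ * τ) * h (φ x u d τ) ≤ 0 := by
          rw [hXτ]
          exact mul_nonpos_of_nonneg_of_nonpos (Real.exp_nonneg _) hx.le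
        have h2 : 0 ≤ Real.exp (-γ * t) *
            payoff h γ φ (φ x u d t) (shiftc t u) (shiftc t d) :=
          mul_nonneg (Real.exp_nonneg _) (payoff_nonneg hγ hM)
        linarith

include hφ hfc hU hD hfl hγ hM hu hd in
/-- P3' : the shifted payoff is controlled by the full payoff, at good times. -/
lemma payoff_shift_ge {t : ℝ} (htSS : t ∈ SS f φ x u d) :
    Real.exp (-γ * t) * payoff h γ φ (φ x u d t) (shiftc t u) (shiftc t d) ≤
      payoff h γ φ x u d := by
  have ht0 : 0 ≤ t := htSS.1
  have hmain : payoff h γ φ (φ x u d t) (shiftc t u) (shiftc t d) ≤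
      Real.exp (γ * t) * payoff h γ φ x u d := by
    refine ciSup_le ?_
    rintro ⟨s, hs0⟩
    simp only
    rw [mem_Ici] at hs0
    by_cases hsSS : s + t ∈ SS f φ x u d
    · have hsh := (shift_lemma hφ hfc hU hD hfl hu hd htSS hs0).1 hsSS
      rw [hsh]
      have hterm := term_le_payoff (φ := φ) hγ hM (x := x) (u := u) (d := d)
        (τ := s + t) (by linarith)
      have hexp : Real.exp (-γ * s) = Real.exp (γ * t) * Real.exp (-γ * (s + t)) := by
        rw [← Real.exp_add]; ring_nf
      calc Real.exp (-γ * s) * h (φ x u d (s + t))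
          = Real.exp (γ * t) * (Real.exp (-γ * (s + t)) * h (φ x u d (s + t))) := by
            rw [hexp]; ring
        _ ≤ Real.exp (γ * t) * payoff h γ φ x u d :=
            mul_le_mul_of_nonneg_left hterm (Real.exp_nonneg _)
    · have hsh := (shift_lemma hφ hfc hU hD hfl hu hd htSS hs0).2 hsSS
      rw [hsh]
      by_cases hy : 0 ≤ h (φ x u d t)
      · have hterm := term_le_payoff (φ := φ) hγ hM (x := x) (u := u) (d := d)
          (τ := t) ht0
        have hexp1 : Real.exp (-γ * s) ≤ 1 := Real.exp_le_one_iff.2 (by nlinarith)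
        have h1 : Real.exp (-γ * s) * h (φ x u d t) ≤ h (φ x u d t) := by
          calc Real.exp (-γ * s) * h (φ x u d t) ≤ 1 * h (φ x u d t) :=
              mul_le_mul_of_nonneg_right hexp1 hy
            _ = h (φ x u d t) := one_mul _
        have h2 : h (φ x u d t) = Real.exp (γ * t) * (Real.exp (-γ * t) * h (φ x u d t)) := by
          rw [← mul_assoc, ← Real.exp_add]
          ring_nf
          rw [Real.exp_zero]; ring
        calc Real.exp (-γ * s) * h (φ x u d t) ≤ h (φ x u d t) := h1
          _ = Real.exp (γ * t) * (Real.exp (-γ * t) * h (φ x u d t)) := h2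
          _ ≤ Real.exp (γ * t) * payoff h γ φ x u d :=
            mul_le_mul_of_nonneg_left hterm (Real.exp_nonneg _)
      · push_neg at hy
        have h1 : Real.exp (-γ * s) * h (φ x u d t) ≤ 0 :=
          mul_nonpos_of_nonneg_of_nonpos (Real.exp_nonneg _) hy.le
        have h2 : 0 ≤ Real.exp (γ * t) * payoff h γ φ x u d :=
          mul_nonneg (Real.exp_nonneg _) (payoff_nonneg hγ hM)
        linarith
  have := mul_le_mul_of_nonneg_left hmain (Real.exp_nonneg (-γ * t))
  calc Real.exp (-γ * t) * payoff h γ φ (φ x u d t) (shiftc t u) (shiftc t d)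
      ≤ Real.exp (-γ * t) * (Real.exp (γ * t) * payoff h γ φ x u d) := this
    _ = payoff h γ φ x u d := by
        rw [← mul_assoc, ← Real.exp_add]
        ring_nf
        rw [Real.exp_zero]; ring

end Split

end DPP

namespace DPP

section Agree

variable {k : ℕ}

lemma null_preimage_add {A : Set ℝ} (hA : volume A = 0) (t : ℝ) :
    volume ((fun σ : ℝ => σ + t) ⁻¹' A) = 0 :=
  ((measurePreserving_add_right volume t).quasiMeasurePreserving).preimage_null hA

lemma agreeAE_iff {c₁ c₂ : ℝ → Euc k} {s : ℝ} :
    AgreeAE c₁ c₂ s ↔ volume ({σ : ℝ | c₁ σ ≠ c₂ σ} ∩ Icc 0 s) = 0 := by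
  unfold AgreeAE
  rw [ae_iff, Measure.restrict_apply' measurableSet_Icc]

lemma AgreeAE.refl (c : ℝ → Euc k) (s : ℝ) : AgreeAE c c s :=
  Filter.Eventually.of_forall (fun _ => rfl)

lemma agree_shift {c₁ c₂ : ℝ → Euc k} {σ₀ t : ℝ} (ht : 0 ≤ t)
    (h : AgreeAE c₁ c₂ σ₀) : AgreeAE (shiftc t c₁) (shiftc t c₂) (σ₀ - t) := by
  rw [agreeAE_iff] at h ⊢
  refine measure_mono_null ?_ (null_preimage_add h t)
  rintro σ ⟨hbad, hσ⟩
  simp only [mem_setOf_eq, shiftc] at hbad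
  rw [mem_Icc] at hσ
  simp only [mem_preimage, mem_inter_iff, mem_setOf_eq, mem_Icc]
  exact ⟨hbad, by linarith [hσ.1], by linarith [hσ.2]⟩

lemma agree_cat_le {c₁ c₂ c₁' c₂' : ℝ → Euc k} {s t : ℝ} (hst : s ≤ t)
    (h : AgreeAE c₁ c₂ s) : AgreeAE (catc t c₁ c₁') (catc t c₂ c₂') s := by
  rw [agreeAE_iff] at h ⊢
  refine measure_mono_null ?_ (measure_union_null h (Real.volume_singleton (a := t)))
  rintro σ ⟨hbad, hσ⟩
  rcases lt_or_ge σ t with hlt | hge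
  · left
    refine ⟨?_, hσ⟩
    simp only [mem_setOf_eq, catc, if_pos hlt] at hbad
    exact hbad
  · right
    have : σ = t := le_antisymm (le_trans hσ.2 hst) hge
    exact this

lemma agree_cat_ge {c₁ c₂ c₁' c₂' : ℝ → Euc k} {s t : ℝ} (ht : 0 ≤ t) (hts : t ≤ s)
    (h : AgreeAE c₁ c₂ t) (h' : AgreeAE c₁' c₂' (s - t)) :
    AgreeAE (catc t c₁ c₁') (catc t c₂ c₂') s := by
  rw [agreeAE_iff] at h h' ⊢
  refine measure_mono_null ?_
    (measure_union_null h (null_preimage_add h' (-t)))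
  rintro σ ⟨hbad, hσ⟩
  rcases lt_or_ge σ t with hlt | hge
  · left
    simp only [mem_setOf_eq, catc, if_pos hlt] at hbad
    exact ⟨hbad, hσ.1, hlt.le⟩
  · right
    simp only [mem_setOf_eq, catc, if_neg (not_lt.2 hge)] at hbad
    refine ⟨?_, ?_, ?_⟩
    · show c₁' (σ + -t) ≠ c₂' (σ + -t)
      rw [← sub_eq_add_neg]
      exact hbad
    · show (0:ℝ) ≤ σ + -t
      linarith
    · show σ + -t ≤ s - t
      linarith [hσ.2]

lemma catc_mem_controls {A : Set (Euc k)} {c c' : ℝ → Euc k}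
    (hc : c ∈ Controls A) (hc' : c' ∈ Controls A) (t : ℝ) :
    catc t c c' ∈ Controls A := by
  constructor
  · unfold catc
    have : Measurable (fun σ : ℝ => c' (σ - t)) := hc'.1.comp (measurable_sub_const t)
    exact Measurable.ite measurableSet_Iio hc.1 this
  · intro s
    unfold catc
    by_cases hs : s < t
    · rw [if_pos hs]; exact hc.2 s
    · rw [if_neg hs]; exact hc'.2 (s - t)

lemma shiftc_catc {c c' : ℝ → Euc k} {t s : ℝ} (hs : 0 ≤ s) :
    shiftc t (catc t c c') s = c' s := by
  unfold shiftc catc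
  rw [if_neg (by linarith : ¬ s + t < t), add_sub_cancel_right]

lemma catc_eq_left {c c' : ℝ → Euc k} {t s : ℝ} (hs : s < t) :
    catc t c c' s = c s := by
  unfold catc; rw [if_pos hs]

end Agree

end DPP

namespace DPP

section Agree2

variable {k : ℕ}

lemma agree_mono {c₁ c₂ : ℝ → Euc k} {s s' : ℝ} (hss : s' ≤ s)
    (h : AgreeAE c₁ c₂ s) : AgreeAE c₁ c₂ s' :=
  ae_mono (Measure.restrict_mono (Icc_subset_Icc le_rfl hss) le_rfl) h

lemma agree_catc_left {c c' : ℝ → Euc k} {t : ℝ} :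
    AgreeAE (catc t c c') c t := by
  rw [agreeAE_iff]
  refine measure_mono_null ?_ (Real.volume_singleton (a := t))
  rintro σ ⟨hbad, hσ⟩
  by_contra hne
  have hlt : σ < t := lt_of_le_of_ne hσ.2 hne
  exact hbad (catc_eq_left hlt)

end Agree2

section Value

variable {f : Euc n → Euc m → Euc l → Euc n} {Uset : Set (Euc m)} {Dset : Set (Euc l)}
  {φ : Euc n → (ℝ → Euc m) → (ℝ → Euc l) → ℝ → Euc n}
  {h : Euc n → ℝ} {γ : ℝ} {M : ℝ}
  (hφ : IsTrajectory f Uset Dset φ) (hfc : ContinuousOnUD f Uset Dset)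
  (hU : IsCompact Uset) (hD : IsCompact Dset) (hfl : LocLipschitzUniformly f Uset Dset)
  (hγ : 0 < γ) (hM : ∀ z, |h z| ≤ M)
  (hneD : Nonempty ↥(Controls Dset)) (hneΓ : Nonempty ↥(NAStrategies Dset Uset))

include hγ hM in
lemma supd_bddAbove {x : Euc n} {α : (ℝ → Euc l) → (ℝ → Euc m)} :
    BddAbove (range (fun d : ↥(Controls Dset) => payoff h γ φ x (α d.1) d.1)) := by
  refine ⟨M, ?_⟩
  rintro y ⟨d, rfl⟩
  exact payoff_le hγ hM

include hγ hM hneD in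
lemma supd_nonneg {x : Euc n} {α : (ℝ → Euc l) → (ℝ → Euc m)} :
    0 ≤ ⨆ d : ↥(Controls Dset), payoff h γ φ x (α d.1) d.1 := by
  obtain ⟨d⟩ := hneD
  exact le_trans (payoff_nonneg hγ hM) (le_ciSup (supd_bddAbove hγ hM) d)

include hγ hM hneD hneΓ in
lemma lowerValue_nonneg {x : Euc n} : 0 ≤ lowerValue h γ Uset Dset φ x := by
  haveI := hneΓ
  exact le_ciInf (fun α => supd_nonneg hγ hM hneD)

include hγ hM hneD hneΓ in
lemma lowerValue_le {x : Euc n} : lowerValue h γ Uset Dset φ x ≤ M := by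
  haveI := hneD
  obtain ⟨α⟩ := hneΓ
  refine le_trans (ciInf_le ⟨0, ?_⟩ α) (ciSup_le (fun d => payoff_le hγ hM))
  rintro y ⟨β, rfl⟩
  exact supd_nonneg hγ hM hneD

include hγ hM hneΓ in
lemma exists_eps_optimal (x : Euc n) {ε : ℝ} (hε : 0 < ε) :
    ∃ α : ↥(NAStrategies Dset Uset), ∀ d : ↥(Controls Dset),
      payoff h γ φ x (α.1 d.1) d.1 ≤ lowerValue h γ Uset Dset φ x + ε := by
  haveI := hneΓ
  have hlt : lowerValue h γ Uset Dset φ x < lowerValue h γ Uset Dset φ x + ε := by linarith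
  obtain ⟨α, hα⟩ := exists_lt_of_ciInf_lt hlt
  refine ⟨α, fun d => ?_⟩
  exact le_trans (le_ciSup (supd_bddAbove hγ hM) d) hα.le

include hγ hM hneD in
lemma lowerValue_le_supd {x : Euc n} (α : ↥(NAStrategies Dset Uset)) :
    lowerValue h γ Uset Dset φ x ≤ ⨆ d : ↥(Controls Dset), payoff h γ φ x (α.1 d.1) d.1 := by
  refine ciInf_le ⟨0, ?_⟩ α
  rintro y ⟨β, rfl⟩
  exact supd_nonneg hγ hM hneD

include hφ hfc hU hD hfl in
/-- payoff congruence from pointwise control agreement on `[0,∞)`. -/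
lemma payoff_congr_pt {z : Euc n} {u₁ u₂ : ℝ → Euc m} {d₁ d₂ : ℝ → Euc l}
    (hu₁ : u₁ ∈ Controls Uset) (hd₁ : d₁ ∈ Controls Dset)
    (hu₂ : u₂ ∈ Controls Uset) (hd₂ : d₂ ∈ Controls Dset)
    (hptu : ∀ σ : ℝ, 0 ≤ σ → u₁ σ = u₂ σ) (hptd : ∀ σ : ℝ, 0 ≤ σ → d₁ σ = d₂ σ) :
    payoff h γ φ z u₁ d₁ = payoff h γ φ z u₂ d₂ := by
  refine payoff_congr (fun τ hτ => ?_)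
  have hau : AgreeAE u₁ u₂ τ := by
    filter_upwards [ae_restrict_mem measurableSet_Icc] with σ hσ
    exact hptu σ hσ.1
  have had : AgreeAE d₁ d₂ τ := by
    filter_upwards [ae_restrict_mem measurableSet_Icc] with σ hσ
    exact hptd σ hσ.1
  exact (locality hφ hfc hU hD hfl hu₁ hd₁ hu₂ hd₂ hau had τ ⟨hτ, le_rfl⟩).1

end Value

end DPP


open DPP in
set_option maxHeartbeats 2000000 in
theorem lowerValue_dynamic_programming {n m l : ℕ}
    (f : Euc n → Euc m → Euc l → Euc n)
    (Uset : Set (Euc m)) (Dset : Set (Euc l))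
    (hU : IsCompact Uset) (hD : IsCompact Dset)
    (hfc : ContinuousOnUD f Uset Dset)
    (hfl : LocLipschitzUniformly f Uset Dset)
    (φ : Euc n → (ℝ → Euc m) → (ℝ → Euc l) → ℝ → Euc n)
    (hφ : IsTrajectory f Uset Dset φ)
    (h : Euc n → ℝ) (hhb : ∃ M : ℝ, ∀ x, |h x| ≤ M) (hhl : LocallyLipschitz h)
    (γ : ℝ) (hγ : 0 < γ)
    :
    ∀ x : Euc n, ∀ t : ℝ, 0 ≤ t →
      lowerValue h γ Uset Dset φ x =
        ⨅ α : ↥(NAStrategies Dset Uset), ⨆ d : ↥(Controls Dset),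
          max (Real.exp (-γ * t) * lowerValue h γ Uset Dset φ (φ x (α.1 d.1) d.1 t))
            (⨆ τ : Icc (0 : ℝ) t, Real.exp (-γ * τ.1) * h (φ x (α.1 d.1) d.1 τ.1)) := by
  intro x t ht
  obtain ⟨M, hM⟩ := hhb
  by_cases hD0 : Nonempty ↥(Controls Dset)
  swap
  · -- no admissible disturbances : both sides are `⨅ α, 0`
    haveI : IsEmpty ↥(Controls Dset) := not_nonempty_iff.1 hD0
    have h1 : lowerValue h γ Uset Dset φ x = ⨅ _ : ↥(NAStrategies Dset Uset), (0:ℝ) := by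
      unfold lowerValue
      exact iInf_congr (fun α => Real.iSup_of_isEmpty _)
    have h2 : (⨅ α : ↥(NAStrategies Dset Uset), ⨆ d : ↥(Controls Dset),
        max (Real.exp (-γ * t) * lowerValue h γ Uset Dset φ (φ x (α.1 d.1) d.1 t))
          (⨆ τ : Icc (0 : ℝ) t, Real.exp (-γ * τ.1) * h (φ x (α.1 d.1) d.1 τ.1))) =
        ⨅ _ : ↥(NAStrategies Dset Uset), (0:ℝ) :=
      iInf_congr (fun α => Real.iSup_of_isEmpty _)
    rw [h1, h2]
  by_cases hΓ0 : Nonempty ↥(NAStrategies Dset Uset)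
  swap
  · -- no strategies : both sides are the infimum over an empty family
    haveI : IsEmpty ↥(NAStrategies Dset Uset) := not_nonempty_iff.1 hΓ0
    have h1 : lowerValue h γ Uset Dset φ x = sInf ∅ := by
      unfold lowerValue
      rw [iInf, range_eq_empty]
    have h2 : (⨅ α : ↥(NAStrategies Dset Uset), ⨆ d : ↥(Controls Dset),
        max (Real.exp (-γ * t) * lowerValue h γ Uset Dset φ (φ x (α.1 d.1) d.1 t))
          (⨆ τ : Icc (0 : ℝ) t, Real.exp (-γ * τ.1) * h (φ x (α.1 d.1) d.1 τ.1))) =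
        sInf ∅ := by
      rw [iInf, range_eq_empty]
    rw [h1, h2]
  -- main case
  have hM0 : 0 ≤ M := le_trans (abs_nonneg _) (hM x)
  have hexple : Real.exp (-γ * t) ≤ 1 := Real.exp_le_one_iff.2 (by nlinarith)
  have hexpnn : 0 ≤ Real.exp (-γ * t) := Real.exp_nonneg _
  have hVnn : ∀ z, 0 ≤ lowerValue h γ Uset Dset φ z :=
    fun z => lowerValue_nonneg hγ hM hD0 hΓ0
  have hVle : ∀ z, lowerValue h γ Uset Dset φ z ≤ M :=
    fun z => lowerValue_le hγ hM hD0 hΓ0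
  -- the family appearing on the right-hand side
  set WW : ↥(NAStrategies Dset Uset) → ℝ := fun α =>
    ⨆ d : ↥(Controls Dset),
      max (Real.exp (-γ * t) * lowerValue h γ Uset Dset φ (φ x (α.1 d.1) d.1 t))
        (⨆ τ : Icc (0 : ℝ) t, Real.exp (-γ * τ.1) * h (φ x (α.1 d.1) d.1 τ.1)) with hWW
  have hterm_nonneg : ∀ (α : ↥(NAStrategies Dset Uset)) (d : ↥(Controls Dset)),
      0 ≤ max (Real.exp (-γ * t) * lowerValue h γ Uset Dset φ (φ x (α.1 d.1) d.1 t))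
        (⨆ τ : Icc (0 : ℝ) t, Real.exp (-γ * τ.1) * h (φ x (α.1 d.1) d.1 τ.1)) :=
    fun α d => le_trans (mul_nonneg hexpnn (hVnn _)) (le_max_left _ _)
  have hterm_le : ∀ (α : ↥(NAStrategies Dset Uset)) (d : ↥(Controls Dset)),
      max (Real.exp (-γ * t) * lowerValue h γ Uset Dset φ (φ x (α.1 d.1) d.1 t))
        (⨆ τ : Icc (0 : ℝ) t, Real.exp (-γ * τ.1) * h (φ x (α.1 d.1) d.1 τ.1)) ≤ M := by
    intro α d
    refine max_le ?_ ?_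
    · calc Real.exp (-γ * t) * lowerValue h γ Uset Dset φ (φ x (α.1 d.1) d.1 t)
          ≤ 1 * M := mul_le_mul hexple (hVle _) (hVnn _) zero_le_one
      _ = M := one_mul M
    · exact runv_le hγ hM ht
  have hterm_bdd : ∀ α : ↥(NAStrategies Dset Uset),
      BddAbove (range (fun d : ↥(Controls Dset) =>
        max (Real.exp (-γ * t) * lowerValue h γ Uset Dset φ (φ x (α.1 d.1) d.1 t))
          (⨆ τ : Icc (0 : ℝ) t, Real.exp (-γ * τ.1) * h (φ x (α.1 d.1) d.1 τ.1)))) := by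
    intro α
    refine ⟨M, ?_⟩
    rintro y ⟨d, rfl⟩
    exact hterm_le α d
  have hWW_nonneg : ∀ α, 0 ≤ WW α := by
    intro α
    obtain ⟨d₀⟩ := hD0
    exact le_trans (hterm_nonneg α d₀) (le_ciSup (hterm_bdd α) d₀)
  have hWW_bddBelow : BddBelow (range WW) := by
    refine ⟨0, ?_⟩
    rintro y ⟨α, rfl⟩
    exact hWW_nonneg α
  refine le_antisymm ?_ ?_
  · -- V x ≤ W
    refine le_of_forall_pos_le_add ?_
    intro ε hε
    have hε2 : 0 < ε/2 := by linarith
    have hWlt : (⨅ α, WW α) < (⨅ α, WW α) + ε/2 := by linarith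
    obtain ⟨αs, hαs⟩ := exists_lt_of_ciInf_lt hWlt
    -- ε/2-optimal strategies from every state
    have hsel : ∀ z : Euc n, ∃ α : ↥(NAStrategies Dset Uset), ∀ d : ↥(Controls Dset),
        payoff h γ φ z (α.1 d.1) d.1 ≤ lowerValue h γ Uset Dset φ z + ε/2 :=
      fun z => exists_eps_optimal hγ hM hΓ0 z hε2
    choose A hA using hsel
    -- the composite strategy
    set abar : (ℝ → Euc l) → ℝ → Euc m := fun dd =>
      catc t (αs.1 dd) ((A (φ x (αs.1 dd) dd t)).1 (shiftc t dd)) with habardef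
    have habar : abar ∈ NAStrategies Dset Uset := by
      constructor
      · intro c hc
        exact catc_mem_controls (αs.2.1 c hc)
          ((A (φ x (αs.1 c) c t)).2.1 (shiftc t c) (shiftc_mem_controls hc t)) t
      · intro c₁ hc₁ c₂ hc₂ s hs hagree
        have hα12 := αs.2.2 c₁ hc₁ c₂ hc₂ s hs hagree
        by_cases hst : s ≤ t
        · exact agree_cat_le hst hα12
        · push_neg at hst
          have hagt : AgreeAE c₁ c₂ t := agree_mono hst.le hagree
          have hα12t : AgreeAE (αs.1 c₁) (αs.1 c₂) t := αs.2.2 c₁ hc₁ c₂ hc₂ t ht hagt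
          have hy : φ x (αs.1 c₁) c₁ t = φ x (αs.1 c₂) c₂ t :=
            (locality hφ hfc hU hD hfl (αs.2.1 c₁ hc₁) hc₁ (αs.2.1 c₂ hc₂) hc₂
              hα12t hagt t ⟨ht, le_rfl⟩).1
          have hsh : AgreeAE (shiftc t c₁) (shiftc t c₂) (s - t) := agree_shift ht hagree
          have htail := (A (φ x (αs.1 c₁) c₁ t)).2.2 (shiftc t c₁)
            (shiftc_mem_controls hc₁ t) (shiftc t c₂) (shiftc_mem_controls hc₂ t)
            (s - t) (by linarith) hsh
          show AgreeAE (catc t (αs.1 c₁) ((A (φ x (αs.1 c₁) c₁ t)).1 (shiftc t c₁)))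
            (catc t (αs.1 c₂) ((A (φ x (αs.1 c₂) c₂ t)).1 (shiftc t c₂))) s
          rw [← hy]
          exact agree_cat_ge ht hst.le hα12t htail
    have hstep1 : lowerValue h γ Uset Dset φ x ≤
        ⨆ d : ↥(Controls Dset), payoff h γ φ x (abar d.1) d.1 :=
      lowerValue_le_supd hγ hM hD0 ⟨abar, habar⟩
    have hstep2 : (⨆ d : ↥(Controls Dset), payoff h γ φ x (abar d.1) d.1) ≤
        WW αs + ε/2 := by
      haveI := hD0
      refine ciSup_le ?_
      intro d
      have hus : αs.1 d.1 ∈ Controls Uset := αs.2.1 d.1 d.2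
      have htailmem : (A (φ x (αs.1 d.1) d.1 t)).1 (shiftc t d.1) ∈ Controls Uset :=
        (A (φ x (αs.1 d.1) d.1 t)).2.1 (shiftc t d.1) (shiftc_mem_controls d.2 t)
      have hub : abar d.1 ∈ Controls Uset := habar.1 d.1 d.2
      -- locality on [0, t]
      have hloc : ∀ τ ∈ Icc (0:ℝ) t, φ x (abar d.1) d.1 τ = φ x (αs.1 d.1) d.1 τ := by
        intro τ hτ
        exact (locality hφ hfc hU hD hfl hub d.2 hus d.2
          agree_catc_left (AgreeAE.refl d.1 t) τ hτ).1
      have hyt : φ x (abar d.1) d.1 t = φ x (αs.1 d.1) d.1 t := hloc t ⟨ht, le_rfl⟩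
      have hsplit := payoff_split_le (x := x) hφ hfc hU hD hfl hγ hM hub d.2 ht
      have hrun : runv h γ φ t x (abar d.1) d.1 = runv h γ φ t x (αs.1 d.1) d.1 :=
        runv_congr hloc
      have hpaytail : payoff h γ φ (φ x (abar d.1) d.1 t) (shiftc t (abar d.1))
          (shiftc t d.1) = payoff h γ φ (φ x (αs.1 d.1) d.1 t)
          ((A (φ x (αs.1 d.1) d.1 t)).1 (shiftc t d.1)) (shiftc t d.1) := by
        rw [hyt]
        refine payoff_congr_pt hφ hfc hU hD hfl
          (shiftc_mem_controls hub t) (shiftc_mem_controls d.2 t)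
          htailmem (shiftc_mem_controls d.2 t) ?_ (fun σ _ => rfl)
        intro σ hσ
        exact shiftc_catc hσ
      have hopt : payoff h γ φ (φ x (αs.1 d.1) d.1 t)
          ((A (φ x (αs.1 d.1) d.1 t)).1 (shiftc t d.1)) (shiftc t d.1) ≤
          lowerValue h γ Uset Dset φ (φ x (αs.1 d.1) d.1 t) + ε/2 :=
        hA (φ x (αs.1 d.1) d.1 t) ⟨shiftc t d.1, shiftc_mem_controls d.2 t⟩
      -- combine
      have hterm2 : Real.exp (-γ * t) * payoff h γ φ (φ x (abar d.1) d.1 t)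
          (shiftc t (abar d.1)) (shiftc t d.1) ≤
          Real.exp (-γ * t) * lowerValue h γ Uset Dset φ (φ x (αs.1 d.1) d.1 t) + ε/2 := by
        rw [hpaytail]
        have h1 := mul_le_mul_of_nonneg_left hopt hexpnn
        have h3 : Real.exp (-γ * t) *
            (lowerValue h γ Uset Dset φ (φ x (αs.1 d.1) d.1 t) + ε/2) =
            Real.exp (-γ * t) * lowerValue h γ Uset Dset φ (φ x (αs.1 d.1) d.1 t) +
            Real.exp (-γ * t) * (ε/2) := by ring
        rw [h3] at h1
        have h2 : Real.exp (-γ * t) * (ε/2) ≤ 1 * (ε/2) :=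
          mul_le_mul_of_nonneg_right hexple (by linarith)
        have h4 : (1:ℝ) * (ε/2) = ε/2 := one_mul _
        linarith [h1, h2]
      have hmax : payoff h γ φ x (abar d.1) d.1 ≤
          max (Real.exp (-γ * t) * lowerValue h γ Uset Dset φ (φ x (αs.1 d.1) d.1 t))
            (⨆ τ : Icc (0 : ℝ) t, Real.exp (-γ * τ.1) * h (φ x (αs.1 d.1) d.1 τ.1)) +
            ε/2 := by
        refine le_trans hsplit ?_
        rw [hrun]
        refine max_le ?_ ?_
        · refine le_trans (le_max_right _ _) (le_add_of_nonneg_right (by linarith))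
        · exact le_trans hterm2 (add_le_add (le_max_left _ _) le_rfl)
      refine le_trans hmax ?_
      have := le_ciSup (hterm_bdd αs) d
      rw [hWW]
      linarith [this]
    calc lowerValue h γ Uset Dset φ x ≤
        ⨆ d : ↥(Controls Dset), payoff h γ φ x (abar d.1) d.1 := hstep1
      _ ≤ WW αs + ε/2 := hstep2
      _ ≤ ((⨅ α, WW α) + ε/2) + ε/2 := by linarith [hαs.le]
      _ = (⨅ α, WW α) + ε := by ring
  · -- W ≤ V x
    refine le_of_forall_pos_le_add ?_
    intro ε hε
    obtain ⟨ab, hab⟩ := exists_eps_optimal hγ hM hΓ0 x hε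
    refine le_trans (ciInf_le hWW_bddBelow ab) ?_
    haveI := hD0
    refine ciSup_le ?_
    intro d
    have hud : ab.1 d.1 ∈ Controls Uset := ab.2.1 d.1 d.2
    refine max_le ?_ ?_
    · -- the value term
      by_cases htSS : t ∈ SS f φ x (ab.1 d.1) d.1
      · -- genuine case : build the shifted strategy
        set β : (ℝ → Euc l) → ℝ → Euc m := fun dd => shiftc t (ab.1 (catc t d.1 dd))
          with hβdef
        have hβ : β ∈ NAStrategies Dset Uset := by
          constructor
          · intro c hc
            exact shiftc_mem_controls (ab.2.1 _ (catc_mem_controls d.2 hc t)) t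
          · intro c₁ hc₁ c₂ hc₂ s hs hagree
            have hcat : AgreeAE (catc t d.1 c₁) (catc t d.1 c₂) (s + t) := by
              refine agree_cat_ge ht (by linarith) (AgreeAE.refl d.1 t) ?_
              rw [add_sub_cancel_right]
              exact hagree
            have hmid := ab.2.2 _ (catc_mem_controls d.2 hc₁ t) _
              (catc_mem_controls d.2 hc₂ t) (s + t) (by linarith) hcat
            have := agree_shift ht hmid
            rw [add_sub_cancel_right] at this
            exact this
        have hVyd : lowerValue h γ Uset Dset φ (φ x (ab.1 d.1) d.1 t) ≤
            ⨆ δ : ↥(Controls Dset), payoff h γ φ (φ x (ab.1 d.1) d.1 t) (β δ.1) δ.1 :=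
          lowerValue_le_supd hγ hM hD0 ⟨β, hβ⟩
        have hpayβ : ∀ δ : ↥(Controls Dset),
            payoff h γ φ (φ x (ab.1 d.1) d.1 t) (β δ.1) δ.1 ≤
            Real.exp (γ * t) * (lowerValue h γ Uset Dset φ x + ε) := by
          intro δ
          have hd'' : catc t d.1 δ.1 ∈ Controls Dset := catc_mem_controls d.2 δ.2 t
          have hu'' : ab.1 (catc t d.1 δ.1) ∈ Controls Uset := ab.2.1 _ hd''
          have hagd : AgreeAE (catc t d.1 δ.1) d.1 t := agree_catc_left
          have hagu : AgreeAE (ab.1 (catc t d.1 δ.1)) (ab.1 d.1) t :=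
            ab.2.2 _ hd'' d.1 d.2 t ht hagd
          have hloc2 := locality (x := x) hφ hfc hU hD hfl hu'' hd'' hud d.2 hagu hagd
          have hy2 : φ x (ab.1 (catc t d.1 δ.1)) (catc t d.1 δ.1) t =
              φ x (ab.1 d.1) d.1 t := (hloc2 t ⟨ht, le_rfl⟩).1
          have htSS'' : t ∈ SS f φ x (ab.1 (catc t d.1 δ.1)) (catc t d.1 δ.1) :=
            (hloc2 t ⟨ht, le_rfl⟩).2.mpr htSS
          have hstep := payoff_shift_ge (x := x) hφ hfc hU hD hfl hγ hM hu'' hd'' htSS''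
          have hpaycongr : payoff h γ φ (φ x (ab.1 (catc t d.1 δ.1)) (catc t d.1 δ.1) t)
              (shiftc t (ab.1 (catc t d.1 δ.1))) (shiftc t (catc t d.1 δ.1)) =
              payoff h γ φ (φ x (ab.1 d.1) d.1 t) (β δ.1) δ.1 := by
            rw [hy2]
            refine payoff_congr_pt hφ hfc hU hD hfl
              (shiftc_mem_controls hu'' t) (shiftc_mem_controls hd'' t)
              (shiftc_mem_controls hu'' t) δ.2 (fun σ _ => rfl) ?_
            intro σ hσ
            exact shiftc_catc hσ
          rw [hpaycongr] at hstep
          have hpay'' : payoff h γ φ x (ab.1 (catc t d.1 δ.1)) (catc t d.1 δ.1) ≤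
              lowerValue h γ Uset Dset φ x + ε := hab ⟨catc t d.1 δ.1, hd''⟩
          have hfinal : Real.exp (-γ * t) *
              payoff h γ φ (φ x (ab.1 d.1) d.1 t) (β δ.1) δ.1 ≤
              lowerValue h γ Uset Dset φ x + ε := le_trans hstep hpay''
          have hid : payoff h γ φ (φ x (ab.1 d.1) d.1 t) (β δ.1) δ.1 =
              Real.exp (γ * t) * (Real.exp (-γ * t) *
              payoff h γ φ (φ x (ab.1 d.1) d.1 t) (β δ.1) δ.1) := by
            rw [← mul_assoc, ← Real.exp_add]
            ring_nf
            rw [Real.exp_zero]; ring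
          rw [hid]
          exact mul_le_mul_of_nonneg_left hfinal (Real.exp_nonneg _)
        have hsupβ : (⨆ δ : ↥(Controls Dset),
            payoff h γ φ (φ x (ab.1 d.1) d.1 t) (β δ.1) δ.1) ≤
            Real.exp (γ * t) * (lowerValue h γ Uset Dset φ x + ε) := ciSup_le hpayβ
        have hVyd2 : lowerValue h γ Uset Dset φ (φ x (ab.1 d.1) d.1 t) ≤
            Real.exp (γ * t) * (lowerValue h γ Uset Dset φ x + ε) := le_trans hVyd hsupβ
        have h5 := mul_le_mul_of_nonneg_left hVyd2 hexpnn
        have h6 : Real.exp (-γ * t) *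
            (Real.exp (γ * t) * (lowerValue h γ Uset Dset φ x + ε)) =
            lowerValue h γ Uset Dset φ x + ε := by
          rw [← mul_assoc, ← Real.exp_add]
          ring_nf
          rw [Real.exp_zero]; ring
        rw [h6] at h5
        exact h5
      · -- frozen case : φ x (ab d) d t = x
        have hyd : φ x (ab.1 d.1) d.1 t = x := eq_of_not_mem_SS hφ hud d.2 ht htSS
        rw [hyd]
        have : Real.exp (-γ * t) * lowerValue h γ Uset Dset φ x ≤
            lowerValue h γ Uset Dset φ x := by
          calc Real.exp (-γ * t) * lowerValue h γ Uset Dset φ x ≤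
              1 * lowerValue h γ Uset Dset φ x :=
              mul_le_mul_of_nonneg_right hexple (hVnn x)
            _ = lowerValue h γ Uset Dset φ x := one_mul _
        linarith
    · -- the running term
      have hrun : runv h γ φ t x (ab.1 d.1) d.1 ≤ payoff h γ φ x (ab.1 d.1) d.1 :=
        runv_le_payoff hγ hM ht
      have : payoff h γ φ x (ab.1 d.1) d.1 ≤ lowerValue h γ Uset Dset φ x + ε := hab d
      exact le_trans hrun this
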